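/- arXiv:2506.18769 — 2 statements merged into one kernel-verified Lean document; each statement's English description precedes it below -/
import Mathlib

section
/- There is an absolute constant C such that for every R>0, every (r,j,t,w,m) with r≤j, every triple 𝒯={𝒯_n}_{n=1}^3 of finite families of unit tubes of (r,j,t,w,m)-type, and every cell P₀∈𝒜(Q_R,𝒫(j,t)[0]) (a translate of the parallelepiped with edge directions e₁=(w,0), e₂=(w,0)×(m,−1), e₃=(m,−1) and side lengths 2^t, 1, 2^{j+t}), one has ∫_{P₀} ∏_{n=1}^3 (∑_{T∈𝒯_n} χ_T)^{1/2} dx ≤ C·2^{(j+t+r)/2}·∏_{n=1}^3 |𝒯_n(P₀)|^{1/2}. Equivalently, 𝓜(0) ≲ 1 with an absolute implicit constant. -/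
open MeasureTheory
open scoped Classical

noncomputable section

/-- Euclidean 3-space. -/
abbrev E3 := EuclideanSpace ℝ (Fin 3)
/-- Euclidean plane. -/
abbrev E2 := EuclideanSpace ℝ (Fin 2)

def toE3 (v : Fin 3 → ℝ) : E3 := (WithLp.equiv 2 (Fin 3 → ℝ)).symm v

/-- A tube: the `radius`-neighborhood of a line through `base` in direction `dir`. -/
structure Tube where
  base : E3
  dir : E3
  radius : ℝ

instance : DecidableEq Tube := Classical.decEq _

/-- The tube as a subset of `ℝ³`. -/
def Tube.toSet (T : Tube) : Set E3 :=
  {x | ∃ c : ℝ, dist x (T.base + c • T.dir) ≤ T.radius}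

/-- The same tube fattened to radius `ρ`. -/
def Tube.fat (T : Tube) (ρ : ℝ) : Tube := ⟨T.base, T.dir, ρ⟩

/-- `∑_{T ∈ 𝒯} χ_T (x)`. -/
def tubeSum (𝒯 : Finset Tube) (x : E3) : ℝ :=
  ∑ T ∈ 𝒯, T.toSet.indicator (fun _ => (1:ℝ)) x

/-- `A ∼ B` with explicit comparability constants: `c·A ≤ B ≤ C·A`. -/
def simC (c C A B : ℝ) : Prop := c * A ≤ B ∧ B ≤ C * A

/-- The axis-parallel square `τ^j_k` of side `2^{-j}` with lower-left vertex `k`. -/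
def sqr (j : ℝ) (k : E2) : Set E2 :=
  {ξ | ∀ i, k i ≤ ξ i ∧ ξ i ≤ k i + 2 ^ (-j)}

/-- The strip `𝔱^j_{w,m}` of width `2^{-j}`, direction `w`, through `m`. -/
def strip (j : ℝ) (w m : E2) : Set E2 :=
  {ξ | (∀ i, 0 ≤ ξ i ∧ ξ i ≤ 2) ∧ ‖ξ - m - (inner ℝ (ξ - m) w : ℝ) • w‖ ≤ 2 ^ (-j)}

/-- Distance between two subsets of the plane. -/
def setDist (A B : Set E2) : ℝ := sInf {d | ∃ a ∈ A, ∃ b ∈ B, d = dist a b}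

/-- Unit normal to the paraboloid `{(ξ, |ξ|²/2)}` at the point over `ξ`. -/
def parabNormal (ξ : E2) : E3 :=
  ‖toE3 ![ξ 0, ξ 1, -1]‖⁻¹ • toE3 ![ξ 0, ξ 1, -1]

/-- The auxiliary data (caps and direction sets) witnessing that a triple of
tube families is of `(r,j,t,w,m)`-type. -/
structure TypeData where
  k : E2
  k' : E2
  k'' : E2
  w' : E2
  S1 : Set E2
  S2 : Set E2
  S3 : Set E2

/-- The triple `𝒯` of families of unit tubes is of `(r,j,t,w,m)`-type,
with witnessing data `D`, relative to comparability constants `c ≤ C`. -/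
def IsTypeWith (c C : ℝ) (r j t : ℕ) (w m : E2)
    (𝒯 : Fin 3 → Finset Tube) (D : TypeData) : Prop :=
  ‖w‖ = 1 ∧ ‖D.w'‖ = 1 ∧ (∀ i, 0 ≤ m i ∧ m i ≤ 2) ∧ r ≤ j ∧
  (∀ n, ∀ T ∈ 𝒯 n, T.radius = 1) ∧
  D.S1 ⊆ sqr j D.k ∩ strip ((j:ℝ) + t) w m ∧
  D.S2 ⊆ sqr j D.k' ∩ strip ((j:ℝ) + t) w m ∧
  D.S3 ⊆ sqr r D.k'' ∩ strip ((r:ℝ) + t) D.w' m ∧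
  m ∈ sqr j D.k ∧
  simC c C (setDist (sqr j D.k) (sqr j D.k')) (2 ^ (-(j:ℝ))) ∧
  simC c C (setDist (sqr j D.k') (sqr r D.k'')) (2 ^ (-(r:ℝ))) ∧
  simC c C (setDist (sqr j D.k) (sqr r D.k'')) (2 ^ (-(r:ℝ))) ∧
  simC c C ‖w - D.w'‖ (2 ^ (-(t:ℝ))) ∧
  (∀ T ∈ 𝒯 0, ∃ ξ ∈ D.S1, T.dir = parabNormal ξ) ∧
  (∀ T ∈ 𝒯 1, ∃ ξ ∈ D.S2, T.dir = parabNormal ξ) ∧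
  (∀ T ∈ 𝒯 2, ∃ ξ ∈ D.S3, T.dir = parabNormal ξ)

/-- The triple `𝒯` is of `(r,j,t,w,m)`-type. -/
def IsType (c C : ℝ) (r j t : ℕ) (w m : E2) (𝒯 : Fin 3 → Finset Tube) : Prop :=
  ∃ D, IsTypeWith c C r j t w m 𝒯 D
/-- Cross product in coordinates. -/
def cross3 (u v : Fin 3 → ℝ) : Fin 3 → ℝ :=
  ![u 1 * v 2 - u 2 * v 1, u 2 * v 0 - u 0 * v 2, u 0 * v 1 - u 1 * v 0]

/-- Normalization of a vector of `ℝ³`. -/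
def unitize (v : Fin 3 → ℝ) : E3 := ‖toE3 v‖⁻¹ • toE3 v

/-- The parallelepiped centered at the origin with edge directions
`e₁ = (w,0)`, `e₂ = (w,0) × (m,-1)`, `e₃ = (m,-1)` and side lengths `s1, s2, s3`. -/
def ppiped (w m : E2) (s1 s2 s3 : ℝ) : Set E3 :=
  {x | ∃ a : Fin 3 → ℝ, |a 0| ≤ s1 / 2 ∧ |a 1| ≤ s2 / 2 ∧ |a 2| ≤ s3 / 2 ∧
    x = a 0 • unitize ![w 0, w 1, 0]
      + a 1 • unitize (cross3 ![w 0, w 1, 0] ![m 0, m 1, -1])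
      + a 2 • unitize ![m 0, m 1, -1]}

/-- `𝒫(j,t,w,m,E,F)[lam]`: side lengths `2^{Ej+t+lam}, 2^{Ej+Ft+lam}, 2^{j+t+lam}`. -/
def PJT (w m : E2) (j t EE FF lam : ℝ) : Set E3 :=
  ppiped w m (2 ^ (EE * j + t + lam)) (2 ^ (EE * j + FF * t + lam)) (2 ^ (j + t + lam))

/-- `𝒫(j,t)[lam]` (the case `E = F = 0`). -/
def Pjt (w m : E2) (j t lam : ℝ) : Set E3 := PJT w m j t 0 0 lam

/-- Translate of a set. -/
def trSet (a : E3) (C : Set E3) : Set E3 := (a + ·) '' C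

/-- `V` is (the set of translation vectors of) a tiling `𝒜(B,C)` of `B` by translates of the
(centered at the origin) cell `C`: disjoint translates covering `B`, one of which is the
translate centered at the center `b` of `B`. -/
def IsTiling (C : Set E3) (b : E3) (B : Set E3) (V : Finset E3) : Prop :=
  b ∈ V ∧ B ⊆ (⋃ a ∈ V, trSet a C) ∧
  ∀ a ∈ V, ∀ a' ∈ V, a ≠ a' → trSet a C ∩ trSet a' C = ∅

/-- `𝒯(P) = {T ∈ 𝒯 : T ∩ P ≠ ∅}`. -/
def tubesMeeting (𝒯 : Finset Tube) (P : Set E3) : Finset Tube :=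
  𝒯.filter (fun T => (T.toSet ∩ P).Nonempty)

/-- The family `𝒯[lam](A, B)`: for each cell `a +ᵥ C` (with `a ∈ V`) contained in `B`,
and each direction of a tube of `𝒯` meeting that cell, the canonical tube of radius
`2^lam` with that direction through the center of the cell. -/
def tubesAt (𝒯 : Finset Tube) (V : Finset E3) (C B : Set E3) (lam : ℝ) : Finset Tube :=
  (V.filter (fun a => trSet a C ⊆ B)).biUnion
    (fun a => (tubesMeeting 𝒯 (trSet a C)).image (fun T => (⟨a, T.dir, 2 ^ lam⟩ : Tube)))

/-- The union of all tubes of radius `ρ` and direction `v` meeting `P`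
(the set `𝒯(T,P)`, identified with the union of its tubes). -/
def dirTubes (ρ : ℝ) (v : E3) (P : Set E3) : Set E3 :=
  {x | ∃ T : Tube, T.radius = ρ ∧ T.dir = v ∧ (T.toSet ∩ P).Nonempty ∧ x ∈ T.toSet}

/-- The constant `𝓜(s)` (relative to the fixed tiling `V` of `Q_R` by translates of
`𝒫(j,t)[s]`): the smallest constant `c` such that
`∫_{P_s} ∏ (∑ χ_T)^{1/2} ≤ c · 2^{(j+t+r)/2} · ∏ |𝒯_n(P_s)|^{1/2}` for all cells `P_s`. -/
def Mconst (𝒯 : Fin 3 → Finset Tube) (w m : E2) (r j t : ℕ)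
    (R : ℝ) (V : Finset E3) (s : ℝ) : ℝ :=
  sInf {c : ℝ | 0 ≤ c ∧ ∀ a ∈ V,
    ∫ x in trSet a (Pjt w m j t s), ∏ n : Fin 3, Real.sqrt (tubeSum (𝒯 n) x)
      ≤ c * 2 ^ (((j:ℝ) + t + r) / 2) *
        ∏ n : Fin 3, Real.sqrt ((tubesMeeting (𝒯 n) (trSet a (Pjt w m j t s))).card)}

/-! ### Auxiliary lemmas for `stmt8` -/

open scoped RealInnerProductSpace ENNReal

section Stmt8Aux

lemma le_of_sq_le_sq' {a b : ℝ} (ha : 0 ≤ a) (hb : 0 ≤ b) (h : a ^ 2 ≤ b ^ 2) : a ≤ b := by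
  nlinarith

/-- Orthogonal projection away from `u`. -/
def prj (u y : E3) : E3 := y - ⟪y, u⟫ • u

lemma prj_sub (u y y' : E3) : prj u (y - y') = prj u y - prj u y' := by
  unfold prj; rw [inner_sub_left]; module

lemma prj_add (u y y' : E3) : prj u (y + y') = prj u y + prj u y' := by
  unfold prj; rw [inner_add_left]; module

lemma prj_smul (u : E3) (c : ℝ) (y : E3) : prj u (c • y) = c • prj u y := by
  unfold prj; rw [real_inner_smul_left]; module

lemma prj_orth {u : E3} (hu : ‖u‖ = 1) (y : E3) (c : ℝ) :
    ⟪prj u y, c • u⟫ = 0 := by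
  unfold prj
  rw [inner_smul_right, inner_sub_left, real_inner_smul_left, real_inner_self_eq_norm_sq, hu]
  ring

lemma prj_norm_le_sub {u : E3} (hu : ‖u‖ = 1) (y : E3) (c : ℝ) :
    ‖prj u y‖ ≤ ‖y - c • u‖ := by
  have hdec : y - c • u = prj u y + (⟪y, u⟫ - c) • u := by unfold prj; module
  have h := norm_add_sq_real (prj u y) ((⟪y, u⟫ - c) • u)
  rw [prj_orth hu] at h
  refine le_of_sq_le_sq' (norm_nonneg _) (norm_nonneg _) ?_
  rw [hdec, h]
  nlinarith [sq_nonneg ‖(⟪y, u⟫ - c) • u‖]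

lemma prj_norm_le {u : E3} (hu : ‖u‖ = 1) (y : E3) : ‖prj u y‖ ≤ ‖y‖ := by
  simpa using prj_norm_le_sub hu y 0

lemma prj_shift {u : E3} (hu : ‖u‖ = 1) (y : E3) (s : ℝ) :
    prj u (y - s • u) = prj u y := by
  unfold prj
  rw [inner_sub_left, real_inner_smul_left, real_inner_self_eq_norm_sq, hu]
  module

/-- Membership in a tube with unit direction. -/
lemma mem_tube_iff {T : Tube} (hv : ‖T.dir‖ = 1) {x : E3} :
    x ∈ T.toSet ↔ ‖prj T.dir (x - T.base)‖ ≤ T.radius := by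
  constructor
  · rintro ⟨c, hc⟩
    rw [dist_eq_norm, sub_add_eq_sub_sub] at hc
    exact le_trans (prj_norm_le_sub hv (x - T.base) c) hc
  · intro h
    exact ⟨⟪x - T.base, T.dir⟫, by rw [dist_eq_norm, sub_add_eq_sub_sub]; exact h⟩

lemma tube_measurableSet {T : Tube} (hv : ‖T.dir‖ = 1) : MeasurableSet T.toSet := by
  have hset : T.toSet = {x : E3 | ‖prj T.dir (x - T.base)‖ ≤ T.radius} :=
    Set.ext fun x => mem_tube_iff hv
  rw [hset]
  have c1 : Continuous fun x : E3 => x - T.base := continuous_id.sub continuous_const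
  have c2 : Continuous fun x : E3 => prj T.dir (x - T.base) :=
    c1.sub (by fun_prop)
  exact (isClosed_le c2.norm continuous_const).measurableSet

/-- A slab: bounded in the `v` direction by `a`, transversally by `b`. -/
def slab (z v : E3) (a b : ℝ) : Set E3 :=
  {x | |⟪x - z, v⟫| ≤ a ∧ ‖prj v (x - z)‖ ≤ b}

lemma volume_slab_le (z : E3) {v : E3} (hv : ‖v‖ = 1) {a b : ℝ} (ha : 0 ≤ a) (hb : 0 ≤ b) :
    volume (slab z v a b) ≤ ENNReal.ofReal (8 * a * b ^ 2) := by
  -- reduce to a slab centred at the origin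
  have htrans : slab z v a b = (fun x : E3 => x + z) '' slab 0 v a b := by
    ext x
    constructor
    · intro hx
      exact ⟨x - z, by simpa [slab] using hx, by show (x - z) + z = x; module⟩
    · rintro ⟨y, hy, rfl⟩
      simpa [slab] using hy
  -- orthonormal basis with first vector `v`
  have hcard : Module.finrank ℝ E3 = Fintype.card (Fin 3) := by
    simp [finrank_euclideanSpace]
  have horth : Orthonormal ℝ (Set.restrict {0} (fun _ : Fin 3 => v)) := by
    constructor
    · intro i; exact hv
    · intro i j hij
      exact absurd (Subtype.ext (i.2.trans j.2.symm)) hij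
  obtain ⟨B, hB0⟩ := horth.exists_orthonormalBasis_extension_of_card_eq hcard
  have hB : B 0 = v := hB0 0 rfl
  -- the box in `EuclideanSpace`
  set e : Fin 3 → ℝ := ![a, b, b] with he
  set box : Set (EuclideanSpace ℝ (Fin 3)) :=
    (MeasurableEquiv.toLp 2 (Fin 3 → ℝ)).symm ⁻¹'
      (Set.univ.pi fun i => Set.Icc (-(e i)) (e i)) with hbox
  have hboxmeas : MeasurableSet box :=
    (MeasurableEquiv.toLp 2 (Fin 3 → ℝ)).symm.measurable
      (MeasurableSet.univ_pi fun i => measurableSet_Icc)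
  have hmem : ∀ y : EuclideanSpace ℝ (Fin 3), y ∈ box ↔ ∀ i, |y i| ≤ e i := by
    intro y
    rw [hbox, Set.mem_preimage, Set.mem_univ_pi]
    constructor
    · intro hy i
      have h := hy i
      rw [Set.mem_Icc] at h
      rw [abs_le]
      exact h
    · intro hy i
      rw [Set.mem_Icc]
      exact abs_le.1 (hy i)
  -- the origin-centred slab maps into the box
  have hsub : slab 0 v a b ⊆ B.repr ⁻¹' box := by
    intro x hx
    obtain ⟨hx1, hx2⟩ := hx
    rw [Set.mem_preimage, hmem]
    intro i
    have hrepr : ∀ i, B.repr x i = ⟪B i, x⟫ := fun i => B.repr_apply_apply x i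
    rcases show i = 0 ∨ i = 1 ∨ i = 2 by omega with rfl | rfl | rfl
    · rw [hrepr, hB, real_inner_comm]
      simpa [he] using hx1
    · have horth10 : ⟪B 1, B 0⟫ = 0 := B.orthonormal.2 (by decide)
      have hkey : ⟪B 1, x⟫ = ⟪B 1, prj v (x - 0)⟫ := by
        unfold prj
        rw [inner_sub_right, inner_smul_right, sub_zero, ← hB, horth10]
        ring
      rw [hrepr, hkey]
      calc |⟪B 1, prj v (x - 0)⟫| ≤ ‖B 1‖ * ‖prj v (x - 0)‖ := abs_real_inner_le_norm _ _
        _ ≤ 1 * b := by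
            have := B.orthonormal.1 1
            rw [this]; exact mul_le_mul_of_nonneg_left hx2 zero_le_one
        _ = e 1 := by simp [he]
    · have horth20 : ⟪B 2, B 0⟫ = 0 := B.orthonormal.2 (by decide)
      have hkey : ⟪B 2, x⟫ = ⟪B 2, prj v (x - 0)⟫ := by
        unfold prj
        rw [inner_sub_right, inner_smul_right, sub_zero, ← hB, horth20]
        ring
      rw [hrepr, hkey]
      calc |⟪B 2, prj v (x - 0)⟫| ≤ ‖B 2‖ * ‖prj v (x - 0)‖ := abs_real_inner_le_norm _ _
        _ ≤ 1 * b := by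
            have := B.orthonormal.1 2
            rw [this]; exact mul_le_mul_of_nonneg_left hx2 zero_le_one
        _ = e 2 := by simp [he]
  -- compute volumes
  have hIcc : ∀ c : ℝ, volume (Set.Icc (-c) c) = ENNReal.ofReal (2 * c) := by
    intro c; rw [Real.volume_Icc]; congr 1; ring
  have hvolbox : volume box = ENNReal.ofReal (2 * a) * (ENNReal.ofReal (2 * b)
      * ENNReal.ofReal (2 * b)) := by
    rw [hbox, (EuclideanSpace.volume_preserving_symm_measurableEquiv_toLp (Fin 3)).measure_preimage
      ((MeasurableSet.univ_pi fun i => measurableSet_Icc).nullMeasurableSet)]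
    rw [MeasureTheory.volume_pi_pi]
    rw [Fin.prod_univ_three, hIcc, hIcc, hIcc]
    rw [show e 0 = a from rfl, show e 1 = b from rfl, show e 2 = b from rfl, mul_assoc]
  calc volume (slab z v a b) = volume ((fun x : E3 => x + z) '' slab 0 v a b) := by
        rw [htrans]
    _ = volume (slab 0 v a b) := by
        have himg : (fun x : E3 => x + z) '' slab 0 v a b
            = (fun x : E3 => x + (-z)) ⁻¹' slab 0 v a b := by
          ext x
          constructor
          · rintro ⟨y, hy, rfl⟩
            have : y + z + -z = y := by module
            simpa [Set.mem_preimage, this] using hy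
          · intro hx
            exact ⟨x + (-z), hx, by show (x + -z) + z = x; module⟩
        rw [himg]
        exact measure_preimage_add_right volume (-z) _
    _ ≤ volume (B.repr ⁻¹' box) := measure_mono hsub
    _ = volume box := B.measurePreserving_repr.measure_preimage hboxmeas.nullMeasurableSet
    _ = ENNReal.ofReal (2 * a) * (ENNReal.ofReal (2 * b) * ENNReal.ofReal (2 * b)) := hvolbox
    _ ≤ ENNReal.ofReal (8 * a * b ^ 2) := by
        rw [← ENNReal.ofReal_mul (by linarith), ← ENNReal.ofReal_mul (by positivity)]
        exact ENNReal.ofReal_le_ofReal (by nlinarith)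

/-- A unit tube meets any set inside a ball of radius `ρ` in volume `≤ 8(2ρ+1)`. -/
lemma tube_inter_ball (T : Tube) (hr : T.radius = 1) (hv : ‖T.dir‖ = 1)
    {S : Set E3} {z : E3} {ρ : ℝ} (hρ : 0 ≤ ρ) (hS : S ⊆ Metric.closedBall z ρ) :
    volume (T.toSet ∩ S) ≤ ENNReal.ofReal (8 * (2 * ρ + 1)) := by
  rcases Set.eq_empty_or_nonempty (T.toSet ∩ S) with he | ⟨x₀, hx₀T, hx₀S⟩
  · rw [he, measure_empty]; positivity
  set v := T.dir
  set z' := T.base + ⟪x₀ - T.base, v⟫ • v with hz'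
  have hx₀z' : ‖x₀ - z'‖ ≤ 1 := by
    have := (mem_tube_iff hv).1 hx₀T
    rw [hr] at this
    have heq : x₀ - z' = prj v (x₀ - T.base) := by
      unfold prj; rw [hz']; abel
    rw [heq]; exact this
  have hsub : T.toSet ∩ S ⊆ slab z' v (2 * ρ + 1) 1 := by
    rintro x ⟨hxT, hxS⟩
    constructor
    · have h1 : ‖x - z'‖ ≤ 2 * ρ + 1 := by
        calc ‖x - z'‖ = ‖(x - x₀) + (x₀ - z')‖ := by abel_nf
          _ ≤ ‖x - x₀‖ + ‖x₀ - z'‖ := norm_add_le _ _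
          _ ≤ 2 * ρ + 1 := by
              have hd : ‖x - x₀‖ ≤ 2 * ρ := by
                have h1 := hS hxS
                have h2 := hS hx₀S
                rw [Metric.mem_closedBall] at h1 h2
                calc ‖x - x₀‖ = dist x x₀ := (dist_eq_norm _ _).symm
                  _ ≤ dist x z + dist z x₀ := dist_triangle _ _ _
                  _ ≤ ρ + ρ := add_le_add h1 (by rwa [dist_comm])
                  _ = 2 * ρ := by ring
              linarith
      calc |⟪x - z', v⟫| ≤ ‖x - z'‖ * ‖v‖ := abs_real_inner_le_norm _ _
        _ ≤ 2 * ρ + 1 := by rw [hv, mul_one]; exact h1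
    · have heq : prj v (x - z') = prj v (x - T.base) := by
        have : x - z' = (x - T.base) - ⟪x₀ - T.base, v⟫ • v := by rw [hz']; abel
        rw [this, prj_shift hv]
      rw [heq]
      have := (mem_tube_iff hv).1 hxT
      rwa [hr] at this
  calc volume (T.toSet ∩ S) ≤ volume (slab z' v (2 * ρ + 1) 1) := measure_mono hsub
    _ ≤ ENNReal.ofReal (8 * (2 * ρ + 1) * 1 ^ 2) := volume_slab_le z' hv (by linarith) zero_le_one
    _ = ENNReal.ofReal (8 * (2 * ρ + 1)) := by norm_num

/-- Two transversal unit tubes intersect in volume `≤ 32/δ`. -/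
lemma tube_inter_tube (T T' : Tube) (hr : T.radius = 1) (hr' : T'.radius = 1)
    (hv : ‖T.dir‖ = 1) (hu : ‖T'.dir‖ = 1) {δ : ℝ} (hδ : 0 < δ)
    (hδle : δ ≤ ‖prj T'.dir T.dir‖) :
    volume (T.toSet ∩ T'.toSet) ≤ ENNReal.ofReal (8 * (4 / δ)) := by
  rcases Set.eq_empty_or_nonempty (T.toSet ∩ T'.toSet) with he | ⟨x₀, hx₀T, hx₀T'⟩
  · rw [he, measure_empty]; positivity
  set v := T.dir
  set u := T'.dir
  set z' := T.base + ⟪x₀ - T.base, v⟫ • v with hz'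
  have hx₀z' : ‖x₀ - z'‖ ≤ 1 := by
    have := (mem_tube_iff hv).1 hx₀T
    rw [hr] at this
    have heq : x₀ - z' = prj v (x₀ - T.base) := by unfold prj; rw [hz']; abel
    rw [heq]; exact this
  have hsub : T.toSet ∩ T'.toSet ⊆ slab z' v (4 / δ) 1 := by
    rintro x ⟨hxT, hxT'⟩
    have htransv : ‖prj v (x - z')‖ ≤ 1 := by
      have heq : prj v (x - z') = prj v (x - T.base) := by
        have : x - z' = (x - T.base) - ⟪x₀ - T.base, v⟫ • v := by rw [hz']; abel
        rw [this, prj_shift hv]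
      rw [heq]
      have := (mem_tube_iff hv).1 hxT
      rwa [hr] at this
    refine ⟨?_, htransv⟩
    -- axial bound via the second tube
    set s := ⟪x - z', v⟫ with hs
    set wvec := prj v (x - z') with hw
    have hxdec : x - x₀ = s • v + wvec - (x₀ - z') := by
      rw [hw]; unfold prj; rw [← hs]; abel
    have hQ2 : ‖prj u (x - x₀)‖ ≤ 2 := by
      have h1 : ‖prj u (x - T'.base)‖ ≤ 1 := by
        have := (mem_tube_iff hu).1 hxT'; rwa [hr'] at this
      have h2 : ‖prj u (x₀ - T'.base)‖ ≤ 1 := by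
        have := (mem_tube_iff hu).1 hx₀T'; rwa [hr'] at this
      have heq : prj u (x - x₀) = prj u (x - T'.base) - prj u (x₀ - T'.base) := by
        rw [← prj_sub]; congr 1; abel
      rw [heq]
      calc ‖prj u (x - T'.base) - prj u (x₀ - T'.base)‖
          ≤ ‖prj u (x - T'.base)‖ + ‖prj u (x₀ - T'.base)‖ := norm_sub_le _ _
        _ ≤ 2 := by linarith
    have hkey : ‖s • prj u v‖ ≤ 4 := by
      have heq : s • prj u v = prj u (x - x₀) - prj u wvec + prj u (x₀ - z') := by
        rw [← prj_smul, hxdec, prj_sub, prj_add]; abel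
      rw [heq]
      have hb1 : ‖prj u wvec‖ ≤ 1 := le_trans (prj_norm_le hu _) htransv
      have hb2 : ‖prj u (x₀ - z')‖ ≤ 1 := le_trans (prj_norm_le hu _) hx₀z'
      calc ‖prj u (x - x₀) - prj u wvec + prj u (x₀ - z')‖
          ≤ ‖prj u (x - x₀) - prj u wvec‖ + ‖prj u (x₀ - z')‖ := norm_add_le _ _
        _ ≤ ‖prj u (x - x₀)‖ + ‖prj u wvec‖ + ‖prj u (x₀ - z')‖ := by
            have := norm_sub_le (prj u (x - x₀)) (prj u wvec); linarith
        _ ≤ 4 := by linarith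
    have hnorm : ‖s • prj u v‖ = |s| * ‖prj u v‖ := by rw [norm_smul, Real.norm_eq_abs]
    have habs : |s| * δ ≤ 4 := by
      calc |s| * δ ≤ |s| * ‖prj u v‖ := mul_le_mul_of_nonneg_left hδle (abs_nonneg _)
        _ ≤ 4 := by rw [← hnorm]; exact hkey
    exact (le_div_iff₀ hδ).2 habs
  calc volume (T.toSet ∩ T'.toSet) ≤ volume (slab z' v (4 / δ) 1) := measure_mono hsub
    _ ≤ ENNReal.ofReal (8 * (4 / δ) * 1 ^ 2) := volume_slab_le z' hv (by positivity) zero_le_one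
    _ = ENNReal.ofReal (8 * (4 / δ)) := by norm_num

lemma toE3_apply (v : Fin 3 → ℝ) (i : Fin 3) : toE3 v i = v i := rfl

lemma parab_inner (ξ η : E2) :
    ⟪toE3 ![ξ 0, ξ 1, -1], toE3 ![η 0, η 1, -1]⟫ = ξ 0 * η 0 + ξ 1 * η 1 + 1 := by
  rw [PiLp.inner_apply]
  simp [toE3_apply, Fin.sum_univ_three]
  ring

lemma parab_norm_sq (ξ : E2) :
    ‖toE3 ![ξ 0, ξ 1, -1]‖ ^ 2 = ξ 0 ^ 2 + ξ 1 ^ 2 + 1 := by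
  rw [← real_inner_self_eq_norm_sq, parab_inner]
  ring

lemma parab_norm_pos (ξ : E2) : 0 < ‖toE3 ![ξ 0, ξ 1, -1]‖ := by
  have h := parab_norm_sq ξ
  nlinarith [norm_nonneg (toE3 ![ξ 0, ξ 1, -1]), sq_nonneg (ξ 0), sq_nonneg (ξ 1)]

lemma parab_unit (ξ : E2) : ‖parabNormal ξ‖ = 1 := by
  unfold parabNormal
  rw [norm_smul, norm_inv, norm_norm]
  exact inv_mul_cancel₀ (ne_of_gt (parab_norm_pos ξ))

lemma dist_sq_E2 (ξ η : E2) : dist ξ η ^ 2 = (ξ 0 - η 0) ^ 2 + (ξ 1 - η 1) ^ 2 := by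
  rw [dist_eq_norm, ← real_inner_self_eq_norm_sq, PiLp.inner_apply]
  simp [Fin.sum_univ_two]

lemma parab_arith {a0 a1 b0 b1 Wx Wy : ℝ}
    (ha0 : 0 ≤ a0) (ha0' : a0 ≤ 2) (ha1 : 0 ≤ a1) (ha1' : a1 ≤ 2)
    (hb0 : 0 ≤ b0) (hb0' : b0 ≤ 2) (hb1 : 0 ≤ b1) (hb1' : b1 ≤ 2)
    (hWx : Wx ^ 2 = a0 ^ 2 + a1 ^ 2 + 1) (hWy : Wy ^ 2 = b0 ^ 2 + b1 ^ 2 + 1)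
    (hWxp : 0 < Wx) (hWyp : 0 < Wy) :
    ((a0 - b0) ^ 2 + (a1 - b1) ^ 2) / 81
      ≤ 2 - 2 * ((Wx * Wy)⁻¹ * (a0 * b0 + a1 * b1 + 1)) := by
  have ha02 : a0 ^ 2 ≤ 4 := by nlinarith
  have ha12 : a1 ^ 2 ≤ 4 := by nlinarith
  have hb02 : b0 ^ 2 ≤ 4 := by nlinarith
  have hb12 : b1 ^ 2 ≤ 4 := by nlinarith
  have hWx3 : Wx ≤ 3 := by nlinarith
  have hWy3 : Wy ≤ 3 := by nlinarith
  have hPpos : 0 < Wx * Wy := mul_pos hWxp hWyp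
  have hP9 : Wx * Wy ≤ 9 := by
    calc Wx * Wy ≤ 3 * 3 := mul_le_mul hWx3 hWy3 hWyp.le (by norm_num)
      _ = 9 := by norm_num
  have hA1 : (0:ℝ) < a0 * b0 + a1 * b1 + 1 := by positivity
  have hsq : (Wx * Wy) ^ 2 - (a0 * b0 + a1 * b1 + 1) ^ 2
      = ((a0 - b0) ^ 2 + (a1 - b1) ^ 2) + (a0 * b1 - a1 * b0) ^ 2 := by
    rw [mul_pow, hWx, hWy]; ring
  have hsqge : (a0 * b0 + a1 * b1 + 1) ^ 2 ≤ (Wx * Wy) ^ 2 := by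
    have h1 := sq_nonneg (a0 * b1 - a1 * b0)
    have h2 := sq_nonneg (a0 - b0)
    have h3 := sq_nonneg (a1 - b1)
    linarith
  have hPA : a0 * b0 + a1 * b1 + 1 ≤ Wx * Wy := by nlinarith
  have hD2nonneg : (0:ℝ) ≤ (a0 - b0) ^ 2 + (a1 - b1) ^ 2 := by positivity
  have e1 : (Wx * Wy - (a0 * b0 + a1 * b1 + 1)) * (Wx * Wy + (a0 * b0 + a1 * b1 + 1))
      = ((a0 - b0) ^ 2 + (a1 - b1) ^ 2) + (a0 * b1 - a1 * b0) ^ 2 := by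
    linear_combination hsq
  have e2 : (a0 - b0) ^ 2 + (a1 - b1) ^ 2
      ≤ (Wx * Wy - (a0 * b0 + a1 * b1 + 1)) * (Wx * Wy + (a0 * b0 + a1 * b1 + 1)) := by
    have := sq_nonneg (a0 * b1 - a1 * b0); linarith
  have e3 : (Wx * Wy - (a0 * b0 + a1 * b1 + 1)) * (Wx * Wy + (a0 * b0 + a1 * b1 + 1))
      ≤ (Wx * Wy - (a0 * b0 + a1 * b1 + 1)) * 18 := by
    apply mul_le_mul_of_nonneg_left _ (by linarith)
    linarith
  have hkey : (a0 - b0) ^ 2 + (a1 - b1) ^ 2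
      ≤ (Wx * Wy - (a0 * b0 + a1 * b1 + 1)) * 18 := le_trans e2 e3
  have h2 : 2 - 2 * ((Wx * Wy)⁻¹ * (a0 * b0 + a1 * b1 + 1))
      = (2 * (Wx * Wy) - 2 * (a0 * b0 + a1 * b1 + 1)) / (Wx * Wy) := by
    field_simp
  rw [h2, le_div_iff₀ hPpos]
  have hmul : ((a0 - b0) ^ 2 + (a1 - b1) ^ 2) * (Wx * Wy)
      ≤ ((a0 - b0) ^ 2 + (a1 - b1) ^ 2) * 9 := mul_le_mul_of_nonneg_left hP9 hD2nonneg
  calc ((a0 - b0) ^ 2 + (a1 - b1) ^ 2) / 81 * (Wx * Wy)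
      = ((a0 - b0) ^ 2 + (a1 - b1) ^ 2) * (Wx * Wy) / 81 := by ring
    _ ≤ ((a0 - b0) ^ 2 + (a1 - b1) ^ 2) * 9 / 81 := by linarith
    _ = ((a0 - b0) ^ 2 + (a1 - b1) ^ 2) / 9 := by ring
    _ ≤ 2 * (Wx * Wy) - 2 * (a0 * b0 + a1 * b1 + 1) := by linarith

/-- Key paraboloid-normal geometry: nonnegative inner product and inverse Lipschitz bound. -/
lemma parab_geom {ξ η : E2} (hξ : ∀ i, 0 ≤ ξ i ∧ ξ i ≤ 2) (hη : ∀ i, 0 ≤ η i ∧ η i ≤ 2) :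
    0 ≤ ⟪parabNormal ξ, parabNormal η⟫ ∧
      dist ξ η / 9 ≤ ‖parabNormal ξ - parabNormal η‖ := by
  have hWx2 := parab_norm_sq ξ
  have hWy2 := parab_norm_sq η
  have hWxpos := parab_norm_pos ξ
  have hWypos := parab_norm_pos η
  have hξ0 := hξ 0; have hξ1 := hξ 1; have hη0 := hη 0; have hη1 := hη 1
  have hxy := parab_inner ξ η
  have hinner : ⟪parabNormal ξ, parabNormal η⟫
      = (‖toE3 ![ξ 0, ξ 1, -1]‖ * ‖toE3 ![η 0, η 1, -1]‖)⁻¹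
        * (ξ 0 * η 0 + ξ 1 * η 1 + 1) := by
    unfold parabNormal
    rw [real_inner_smul_left, real_inner_smul_right, hxy, mul_inv]
    ring
  have hinnge : 0 ≤ ⟪parabNormal ξ, parabNormal η⟫ := by
    rw [hinner]
    have h1 : (0:ℝ) ≤ ξ 0 * η 0 + ξ 1 * η 1 + 1 := by nlinarith [hξ0.1, hξ1.1, hη0.1, hη1.1]
    positivity
  refine ⟨hinnge, ?_⟩
  have hnormsq : ‖parabNormal ξ - parabNormal η‖ ^ 2
      = 2 - 2 * ⟪parabNormal ξ, parabNormal η⟫ := by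
    rw [norm_sub_sq_real, parab_unit, parab_unit]; ring
  have harith := parab_arith hξ0.1 hξ0.2 hξ1.1 hξ1.2 hη0.1 hη0.2 hη1.1 hη1.2
    hWx2 hWy2 hWxpos hWypos
  refine le_of_sq_le_sq' (by positivity) (norm_nonneg _) ?_
  rw [hnormsq, div_pow, dist_sq_E2, hinner]
  have h81 : (9:ℝ) ^ 2 = 81 := by norm_num
  rw [h81]
  exact harith

/-- Transversality of projections from unit vectors with nonnegative inner product. -/
lemma prj_dir_lower {v u : E3} (hv : ‖v‖ = 1) (hu : ‖u‖ = 1) (hin : 0 ≤ ⟪v, u⟫) :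
    ‖v - u‖ / 2 ≤ ‖prj u v‖ := by
  have h1 : ⟪v, u⟫ ≤ 1 := by
    have := real_inner_le_norm v u; rw [hv, hu] at this; linarith
  have h2 : ‖prj u v‖ ^ 2 = 1 - ⟪v, u⟫ ^ 2 := by
    unfold prj
    rw [norm_sub_sq_real, inner_smul_right, norm_smul, Real.norm_eq_abs, hu, hv]
    ring_nf
    rw [sq_abs]
    ring
  have h3 : ‖v - u‖ ^ 2 = 2 - 2 * ⟪v, u⟫ := by
    rw [norm_sub_sq_real, hv, hu]; ring
  refine le_of_sq_le_sq' (by positivity) (norm_nonneg _) ?_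
  rw [h2, div_pow, h3]
  nlinarith

lemma unitize_norm_le (v : Fin 3 → ℝ) : ‖unitize v‖ ≤ 1 := by
  unfold unitize
  rw [norm_smul, norm_inv, norm_norm]
  rcases eq_or_ne ‖toE3 v‖ 0 with h | h
  · rw [h]; norm_num
  · rw [inv_mul_cancel₀ h]

end Stmt8Aux

/-- **Lemma: `𝓜(0) ≲ 1`.** There is an absolute constant `C` such that for
every `R > 0`, every `(r,j,t,w,m)` with `r ≤ j`, every triple of finite families of unit
tubes of `(r,j,t,w,m)`-type, and every cell `P₀` of a tiling of `Q_R` by translates of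
`𝒫(j,t)[0]`,
`∫_{P₀} ∏ (∑_{T∈𝒯_n} χ_T)^{1/2} ≤ C · 2^{(j+t+r)/2} · ∏ |𝒯_n(P₀)|^{1/2}`. -/
theorem stmt8 (cS CS : ℝ) (hc : 0 < cS) (hcC : cS ≤ CS) :
    ∃ C : ℝ, 0 < C ∧
    ∀ R : ℝ, 0 < R →
    ∀ (r j t : ℕ) (w m : E2) (𝒯 : Fin 3 → Finset Tube),
      IsType cS CS r j t w m 𝒯 →
    ∀ V : Finset E3, IsTiling (Pjt w m j t 0) 0 (Metric.ball 0 R) V →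
    ∀ a ∈ V,
      ∫ x in trSet a (Pjt w m j t 0), ∏ n : Fin 3, Real.sqrt (tubeSum (𝒯 n) x)
        ≤ C * 2 ^ (((j:ℝ) + t + r) / 2) *
            ∏ n : Fin 3, Real.sqrt ((tubesMeeting (𝒯 n) (trSet a (Pjt w m j t 0))).card) := by
  have hCS : 0 < CS := lt_of_lt_of_le hc hcC
  refine ⟨576 * (CS + 1), by positivity, ?_⟩
  intro R hR r j t w m 𝒯 hType V hV a haV
  obtain ⟨D, hw1, hw'1, hm, hrj, hrad, hS1, hS2, hS3, hmk, hd1, hd2, hd3, hwt,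
    hdir0, hdir1, hdir2⟩ := hType
  set P : Set E3 := trSet a (Pjt w m (j:ℝ) (t:ℝ) 0) with hPdef
  set μP := volume.restrict P with hmuP
  -- basic exponent facts
  have h2r : (0:ℝ) < 2 ^ (r:ℝ) := Real.rpow_pos_of_pos two_pos _
  have h2jt : (0:ℝ) < 2 ^ ((j:ℝ) + t) := Real.rpow_pos_of_pos two_pos _
  have hjt1 : (1:ℝ) ≤ 2 ^ ((j:ℝ) + t) := by
    have := Real.rpow_le_rpow_of_exponent_le (one_le_two)
      (show (0:ℝ) ≤ (j:ℝ) + t by positivity)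
    rwa [Real.rpow_zero] at this
  have h2t : (2:ℝ) ^ ((t:ℝ)) ≤ 2 ^ ((j:ℝ) + t) := by
    apply Real.rpow_le_rpow_of_exponent_le one_le_two
    have : (0:ℝ) ≤ (j:ℝ) := Nat.cast_nonneg j
    linarith
  -- directions
  have hdirn : ∀ n : Fin 3, ∀ T ∈ 𝒯 n, ∃ ξ : E2,
      (∀ i, 0 ≤ ξ i ∧ ξ i ≤ 2) ∧ T.dir = parabNormal ξ := by
    intro n T hT
    fin_cases n
    · obtain ⟨ξ, hξ, hdir⟩ := hdir0 T hT
      exact ⟨ξ, ((hS1 hξ).2).1, hdir⟩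
    · obtain ⟨ξ, hξ, hdir⟩ := hdir1 T hT
      exact ⟨ξ, ((hS2 hξ).2).1, hdir⟩
    · obtain ⟨ξ, hξ, hdir⟩ := hdir2 T hT
      exact ⟨ξ, ((hS3 hξ).2).1, hdir⟩
  have hunit : ∀ n : Fin 3, ∀ T ∈ 𝒯 n, ‖T.dir‖ = 1 := by
    intro n T hT
    obtain ⟨ξ, _, h⟩ := hdirn n T hT
    rw [h]; exact parab_unit ξ
  have hmeasT : ∀ n : Fin 3, ∀ T ∈ 𝒯 n, MeasurableSet T.toSet :=
    fun n T hT => tube_measurableSet (hunit n T hT)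
  -- the cell is contained in a ball
  have hPball : P ⊆ Metric.closedBall a (3 / 2 * 2 ^ ((j:ℝ) + t)) := by
    rintro x ⟨y, hy, rfl⟩
    simp only [Pjt, PJT, ppiped, Set.mem_setOf_eq] at hy
    obtain ⟨c, hc0, hc1, hc2, hyeq⟩ := hy
    have he1 : (0:ℝ) * (j:ℝ) + (t:ℝ) + 0 = (t:ℝ) := by ring
    have he2 : (0:ℝ) * (j:ℝ) + 0 * (t:ℝ) + 0 = (0:ℝ) := by ring
    have he3 : (j:ℝ) + (t:ℝ) + 0 = (j:ℝ) + t := by ring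
    rw [he1] at hc0
    rw [he2, Real.rpow_zero] at hc1
    rw [he3] at hc2
    have hdista : dist (a + y) a = ‖y‖ := by
      rw [dist_eq_norm]
      congr 1
      abel
    rw [Metric.mem_closedBall, hdista, hyeq]
    have hb0 : ‖c 0 • unitize ![w 0, w 1, 0]‖ ≤ |c 0| := by
      rw [norm_smul, Real.norm_eq_abs]
      exact mul_le_of_le_one_right (abs_nonneg _) (unitize_norm_le _)
    have hb1 : ‖c 1 • unitize (cross3 ![w 0, w 1, 0] ![m 0, m 1, -1])‖ ≤ |c 1| := by
      rw [norm_smul, Real.norm_eq_abs]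
      exact mul_le_of_le_one_right (abs_nonneg _) (unitize_norm_le _)
    have hb2 : ‖c 2 • unitize ![m 0, m 1, -1]‖ ≤ |c 2| := by
      rw [norm_smul, Real.norm_eq_abs]
      exact mul_le_of_le_one_right (abs_nonneg _) (unitize_norm_le _)
    calc ‖c 0 • unitize ![w 0, w 1, 0]
          + c 1 • unitize (cross3 ![w 0, w 1, 0] ![m 0, m 1, -1])
          + c 2 • unitize ![m 0, m 1, -1]‖
        ≤ ‖c 0 • unitize ![w 0, w 1, 0]
            + c 1 • unitize (cross3 ![w 0, w 1, 0] ![m 0, m 1, -1])‖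
          + ‖c 2 • unitize ![m 0, m 1, -1]‖ := norm_add_le _ _
      _ ≤ ‖c 0 • unitize ![w 0, w 1, 0]‖
          + ‖c 1 • unitize (cross3 ![w 0, w 1, 0] ![m 0, m 1, -1])‖
          + ‖c 2 • unitize ![m 0, m 1, -1]‖ := by
          have := norm_add_le (c 0 • unitize ![w 0, w 1, 0])
            (c 1 • unitize (cross3 ![w 0, w 1, 0] ![m 0, m 1, -1]))
          linarith
      _ ≤ |c 0| + |c 1| + |c 2| := by linarith
      _ ≤ 2 ^ ((t:ℝ)) / 2 + 1 / 2 + 2 ^ ((j:ℝ) + t) / 2 := by linarith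
      _ ≤ 3 / 2 * 2 ^ ((j:ℝ) + t) := by linarith
  -- measurability of the real integrand
  have htubeSum_meas : ∀ n : Fin 3, Measurable (tubeSum (𝒯 n)) := by
    intro n
    unfold tubeSum
    exact Finset.measurable_sum _ fun T hT => measurable_const.indicator (hmeasT n T hT)
  have htubeSum_nonneg : ∀ (n : Fin 3) x, 0 ≤ tubeSum (𝒯 n) x := fun n x =>
    Finset.sum_nonneg fun T _ => Set.indicator_nonneg (fun _ _ => zero_le_one) x
  have hprod_meas : Measurable fun x => ∏ n : Fin 3, Real.sqrt (tubeSum (𝒯 n) x) :=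
    Finset.measurable_prod _ fun n _ =>
      Real.continuous_sqrt.measurable.comp (htubeSum_meas n)
  -- the ENNReal-valued counting functions
  set F : Fin 3 → E3 → ℝ≥0∞ :=
    fun n x => ∑ T ∈ 𝒯 n, T.toSet.indicator (fun _ => (1:ℝ≥0∞)) x with hF
  have hFmeas : ∀ n, Measurable (F n) := fun n =>
    Finset.measurable_sum _ fun T hT => measurable_const.indicator (hmeasT n T hT)
  have hofReal : ∀ (n : Fin 3) x, ENNReal.ofReal (tubeSum (𝒯 n) x) = F n x := by
    intro n x
    unfold tubeSum
    rw [ENNReal.ofReal_sum_of_nonneg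
      (fun T _ => Set.indicator_nonneg (fun _ _ => zero_le_one) x)]
    refine Finset.sum_congr rfl fun T _ => ?_
    by_cases hx : x ∈ T.toSet
    · simp [hx]
    · simp [hx]
  have hsqrtF : ∀ (n : Fin 3) x,
      ENNReal.ofReal (Real.sqrt (tubeSum (𝒯 n) x)) = (F n x) ^ (1/2 : ℝ) := by
    intro n x
    rw [Real.sqrt_eq_rpow, ← ENNReal.ofReal_rpow_of_nonneg (htubeSum_nonneg n x)
      (by norm_num : (0:ℝ) ≤ 1/2), hofReal n x]
  have hptwise : ∀ x, ENNReal.ofReal (∏ n : Fin 3, Real.sqrt (tubeSum (𝒯 n) x))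
      = (F 0 x) ^ (1/2:ℝ) * ((F 1 x * F 2 x) ^ (1/2:ℝ)) := by
    intro x
    rw [Fin.prod_univ_three]
    rw [ENNReal.ofReal_mul (by positivity), ENNReal.ofReal_mul (Real.sqrt_nonneg _)]
    rw [hsqrtF 0, hsqrtF 1, hsqrtF 2]
    rw [ENNReal.mul_rpow_of_nonneg _ _ (by norm_num : (0:ℝ) ≤ 1/2)]
    ring
  have hIeq : ∫ x in P, ∏ n : Fin 3, Real.sqrt (tubeSum (𝒯 n) x)
      = (∫⁻ x, (F 0 x) ^ (1/2:ℝ) * ((F 1 x * F 2 x) ^ (1/2:ℝ)) ∂μP).toReal := by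
    rw [MeasureTheory.integral_eq_lintegral_of_nonneg_ae
      (Filter.Eventually.of_forall fun x => Finset.prod_nonneg fun n _ => Real.sqrt_nonneg _)
      hprod_meas.aestronglyMeasurable]
    congr 1
    exact lintegral_congr hptwise
  -- bound for the single family
  have hterm : ∀ (n : Fin 3), ∀ T ∈ 𝒯 n,
      ∫⁻ x, T.toSet.indicator (fun _ => (1:ℝ≥0∞)) x ∂μP = volume (T.toSet ∩ P) := by
    intro n T hT
    rw [lintegral_indicator (hmeasT n T hT), setLIntegral_one]
    exact Measure.restrict_apply (hmeasT n T hT)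
  have hN0 : ∫⁻ x, F 0 x ∂μP
      ≤ ((tubesMeeting (𝒯 0) P).card : ℝ≥0∞) * ENNReal.ofReal (32 * 2 ^ ((j:ℝ) + t)) := by
    rw [lintegral_finset_sum _ (fun T hT => measurable_const.indicator (hmeasT 0 T hT))]
    rw [Finset.sum_congr rfl (hterm 0)]
    have hzero : ∀ T ∈ 𝒯 0, T ∉ tubesMeeting (𝒯 0) P → volume (T.toSet ∩ P) = 0 := by
      intro T hT hnT
      have hne : ¬ (T.toSet ∩ P).Nonempty := by
        intro hne
        exact hnT (Finset.mem_filter.2 ⟨hT, hne⟩)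
      rw [Set.not_nonempty_iff_eq_empty.1 hne, measure_empty]
    rw [← Finset.sum_subset (Finset.filter_subset _ _) hzero]
    calc ∑ T ∈ tubesMeeting (𝒯 0) P, volume (T.toSet ∩ P)
        ≤ ∑ _T ∈ tubesMeeting (𝒯 0) P, ENNReal.ofReal (32 * 2 ^ ((j:ℝ) + t)) := by
          refine Finset.sum_le_sum fun T hT => ?_
          have hT0 : T ∈ 𝒯 0 := (Finset.mem_filter.1 hT).1
          refine le_trans (tube_inter_ball T (hrad 0 T hT0) (hunit 0 T hT0)
            (by positivity) hPball) (ENNReal.ofReal_le_ofReal ?_)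
          nlinarith [hjt1]
      _ = ((tubesMeeting (𝒯 0) P).card : ℝ≥0∞) * ENNReal.ofReal (32 * 2 ^ ((j:ℝ) + t)) := by
          rw [Finset.sum_const, nsmul_eq_mul]
  -- transversal bound for a pair of tubes from families 1 and 2
  have hpair : ∀ T ∈ 𝒯 1, ∀ T' ∈ 𝒯 2, volume (T.toSet ∩ T'.toSet)
      ≤ ENNReal.ofReal (576 * CS * 2 ^ (r:ℝ)) := by
    intro T hT T' hT'
    obtain ⟨ξ, hξS, hξdir⟩ := hdir1 T hT
    obtain ⟨η, hηS, hηdir⟩ := hdir2 T' hT'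
    have hξsq : ξ ∈ sqr (j:ℝ) D.k' := (hS2 hξS).1
    have hηsq : η ∈ sqr (r:ℝ) D.k'' := (hS3 hηS).1
    have hξbox : ∀ i, 0 ≤ ξ i ∧ ξ i ≤ 2 := ((hS2 hξS).2).1
    have hηbox : ∀ i, 0 ≤ η i ∧ η i ≤ 2 := ((hS3 hηS).2).1
    have hsetd : setDist (sqr (j:ℝ) D.k') (sqr (r:ℝ) D.k'') ≤ dist ξ η := by
      apply csInf_le
      · refine ⟨0, fun d hd => ?_⟩
        obtain ⟨u, _, v', _, rfl⟩ := hd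
        exact dist_nonneg
      · exact ⟨ξ, hξsq, η, hηsq, rfl⟩
    have hdistlow : 2 ^ (-(r:ℝ)) / CS ≤ dist ξ η := by
      have h := hd2.2
      rw [div_le_iff₀ hCS]
      calc (2:ℝ) ^ (-(r:ℝ)) ≤ CS * setDist (sqr (j:ℝ) D.k') (sqr (r:ℝ) D.k'') := h
        _ ≤ CS * dist ξ η := mul_le_mul_of_nonneg_left hsetd hCS.le
        _ = dist ξ η * CS := by ring
    obtain ⟨hinn0, hdist9⟩ := parab_geom hξbox hηbox
    have hδpos : (0:ℝ) < 2 ^ (-(r:ℝ)) / (18 * CS) := by positivity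
    have hδle : 2 ^ (-(r:ℝ)) / (18 * CS) ≤ ‖prj T'.dir T.dir‖ := by
      rw [hξdir, hηdir]
      have h1 := prj_dir_lower (parab_unit ξ) (parab_unit η) hinn0
      have heq : (2:ℝ) ^ (-(r:ℝ)) / (18 * CS) = ((2:ℝ) ^ (-(r:ℝ)) / CS) / 18 := by
        rw [div_div, mul_comm]
      rw [heq]
      linarith
    have hvol := tube_inter_tube T T' (hrad 1 T hT) (hrad 2 T' hT')
      (hunit 1 T hT) (hunit 2 T' hT') hδpos hδle
    refine le_trans hvol (le_of_eq (congrArg ENNReal.ofReal ?_))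
    rw [Real.rpow_neg (by norm_num : (0:ℝ) ≤ 2)]
    field_simp
    ring
  -- bound for the product of families 1 and 2
  have hprodF : ∀ x, F 1 x * F 2 x
      = ∑ T ∈ 𝒯 1, ∑ T' ∈ 𝒯 2,
          (T.toSet ∩ T'.toSet).indicator (fun _ => (1:ℝ≥0∞)) x := by
    intro x
    rw [Finset.sum_mul_sum]
    refine Finset.sum_congr rfl fun T _ => Finset.sum_congr rfl fun T' _ => ?_
    have := Set.inter_indicator_mul (s := T.toSet) (t := T'.toSet)
      (fun _ : E3 => (1:ℝ≥0∞)) (fun _ : E3 => (1:ℝ≥0∞)) x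
    simpa using this.symm
  have hN12 : ∫⁻ x, F 1 x * F 2 x ∂μP
      ≤ ((tubesMeeting (𝒯 1) P).card : ℝ≥0∞) * ((tubesMeeting (𝒯 2) P).card : ℝ≥0∞)
        * ENNReal.ofReal (576 * CS * 2 ^ (r:ℝ)) := by
    have hmeas12 : ∀ T ∈ 𝒯 1, ∀ T' ∈ 𝒯 2,
        MeasurableSet (T.toSet ∩ T'.toSet) := fun T hT T' hT' =>
      (hmeasT 1 T hT).inter (hmeasT 2 T' hT')
    calc ∫⁻ x, F 1 x * F 2 x ∂μP
        = ∑ T ∈ 𝒯 1, ∑ T' ∈ 𝒯 2, volume (T.toSet ∩ T'.toSet ∩ P) := by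
          rw [lintegral_congr hprodF]
          rw [lintegral_finset_sum _ (fun T hT => Finset.measurable_sum _
            (fun T' hT' => measurable_const.indicator (hmeas12 T hT T' hT')))]
          refine Finset.sum_congr rfl fun T hT => ?_
          rw [lintegral_finset_sum _ (fun T' hT' =>
            measurable_const.indicator (hmeas12 T hT T' hT'))]
          refine Finset.sum_congr rfl fun T' hT' => ?_
          rw [lintegral_indicator (hmeas12 T hT T' hT'), setLIntegral_one]
          exact Measure.restrict_apply (hmeas12 T hT T' hT')
      _ = ∑ T ∈ tubesMeeting (𝒯 1) P, ∑ T' ∈ 𝒯 2,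
            volume (T.toSet ∩ T'.toSet ∩ P) := by
          refine (Finset.sum_subset (Finset.filter_subset _ _) ?_).symm
          intro T hT hnT
          refine Finset.sum_eq_zero fun T' _ => ?_
          have hne : ¬ (T.toSet ∩ P).Nonempty := fun hne =>
            hnT (Finset.mem_filter.2 ⟨hT, hne⟩)
          have hTP : T.toSet ∩ P = ∅ := Set.not_nonempty_iff_eq_empty.1 hne
          have h0 : volume (T.toSet ∩ P) = 0 := by rw [hTP, measure_empty]
          refine le_antisymm (le_trans (measure_mono ?_) h0.le) (by simp)
          exact Set.inter_subset_inter_left P Set.inter_subset_left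
      _ = ∑ T ∈ tubesMeeting (𝒯 1) P, ∑ T' ∈ tubesMeeting (𝒯 2) P,
            volume (T.toSet ∩ T'.toSet ∩ P) := by
          refine Finset.sum_congr rfl fun T _ => ?_
          refine (Finset.sum_subset (Finset.filter_subset _ _) ?_).symm
          intro T' hT' hnT'
          have hne : ¬ (T'.toSet ∩ P).Nonempty := fun hne =>
            hnT' (Finset.mem_filter.2 ⟨hT', hne⟩)
          have hTP : T'.toSet ∩ P = ∅ := Set.not_nonempty_iff_eq_empty.1 hne
          have h0 : volume (T'.toSet ∩ P) = 0 := by rw [hTP, measure_empty]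
          refine le_antisymm (le_trans (measure_mono ?_) h0.le) (by simp)
          exact Set.inter_subset_inter_left P Set.inter_subset_right
      _ ≤ ∑ _T ∈ tubesMeeting (𝒯 1) P, ∑ _T' ∈ tubesMeeting (𝒯 2) P,
            ENNReal.ofReal (576 * CS * 2 ^ (r:ℝ)) := by
          refine Finset.sum_le_sum fun T hT => Finset.sum_le_sum fun T' hT' => ?_
          have h1 : T ∈ 𝒯 1 := (Finset.mem_filter.1 hT).1
          have h2 : T' ∈ 𝒯 2 := (Finset.mem_filter.1 hT').1
          exact le_trans (measure_mono Set.inter_subset_left) (hpair T h1 T' h2)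
      _ = ((tubesMeeting (𝒯 1) P).card : ℝ≥0∞) * ((tubesMeeting (𝒯 2) P).card : ℝ≥0∞)
            * ENNReal.ofReal (576 * CS * 2 ^ (r:ℝ)) := by
          rw [Finset.sum_const, Finset.sum_const, nsmul_eq_mul, nsmul_eq_mul]
          ring
  -- Cauchy–Schwarz
  have hconj : (2:ℝ).HolderConjugate 2 := Real.HolderConjugate.two_two
  have hHolder := ENNReal.lintegral_mul_le_Lp_mul_Lq μP hconj
    ((hFmeas 0).pow_const (1/2:ℝ)).aemeasurable
    (((hFmeas 1).mul (hFmeas 2)).pow_const (1/2:ℝ)).aemeasurable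
  have hcollapse : ∀ y : ℝ≥0∞, (y ^ (1/2:ℝ)) ^ (2:ℝ) = y := by
    intro y
    rw [← ENNReal.rpow_mul]
    norm_num
  -- abbreviations
  set N0 := (tubesMeeting (𝒯 0) P).card with hN0def
  set N1 := (tubesMeeting (𝒯 1) P).card with hN1def
  set N2 := (tubesMeeting (𝒯 2) P).card with hN2def
  set K1 : ℝ := 32 * 2 ^ ((j:ℝ) + t) with hK1def
  set K2 : ℝ := 576 * CS * 2 ^ (r:ℝ) with hK2def
  have hK1pos : 0 < K1 := by rw [hK1def]; positivity
  have hK2pos : 0 < K2 := by rw [hK2def]; positivity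
  -- the real inequality
  have hreal : Real.sqrt ((N0:ℝ) * K1) * Real.sqrt (((N1:ℝ) * (N2:ℝ)) * K2)
      ≤ 576 * (CS + 1) * 2 ^ (((j:ℝ) + t + r) / 2)
        * (Real.sqrt (N0:ℝ) * Real.sqrt (N1:ℝ) * Real.sqrt (N2:ℝ)) := by
    have hk : Real.sqrt K1 * Real.sqrt K2
        ≤ 576 * (CS + 1) * 2 ^ (((j:ℝ) + t + r) / 2) := by
      rw [← Real.sqrt_mul hK1pos.le]
      have hpow : (2:ℝ) ^ ((j:ℝ) + t + r) = 2 ^ ((j:ℝ) + t) * 2 ^ (r:ℝ) :=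
        Real.rpow_add two_pos _ _
      have hKK : K1 * K2 = 18432 * CS * 2 ^ ((j:ℝ) + t + (r:ℝ)) := by
        rw [hK1def, hK2def, hpow]; ring
      rw [hKK, Real.sqrt_mul (by positivity : (0:ℝ) ≤ 18432 * CS)]
      have hs2 : Real.sqrt ((2:ℝ) ^ ((j:ℝ) + t + r)) = 2 ^ (((j:ℝ) + t + r) / 2) := by
        rw [Real.sqrt_eq_rpow, ← Real.rpow_mul (by norm_num : (0:ℝ) ≤ 2), mul_one_div]
      rw [hs2]
      have hc2 : Real.sqrt (18432 * CS) ≤ 576 * (CS + 1) := by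
        have h1 : 18432 * CS ≤ (576 * (CS + 1)) ^ 2 := by nlinarith [hCS.le]
        calc Real.sqrt (18432 * CS) ≤ Real.sqrt ((576 * (CS + 1)) ^ 2) :=
              Real.sqrt_le_sqrt h1
          _ = 576 * (CS + 1) := Real.sqrt_sq (by positivity)
      exact mul_le_mul_of_nonneg_right hc2 (by positivity)
    calc Real.sqrt ((N0:ℝ) * K1) * Real.sqrt (((N1:ℝ) * (N2:ℝ)) * K2)
        = (Real.sqrt K1 * Real.sqrt K2)
          * (Real.sqrt (N0:ℝ) * Real.sqrt (N1:ℝ) * Real.sqrt (N2:ℝ)) := by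
          rw [Real.sqrt_mul (Nat.cast_nonneg N0),
            Real.sqrt_mul (mul_nonneg (Nat.cast_nonneg N1) (Nat.cast_nonneg N2)),
            Real.sqrt_mul (Nat.cast_nonneg N1)]
          ring
      _ ≤ (576 * (CS + 1) * 2 ^ (((j:ℝ) + t + r) / 2))
          * (Real.sqrt (N0:ℝ) * Real.sqrt (N1:ℝ) * Real.sqrt (N2:ℝ)) :=
          mul_le_mul_of_nonneg_right hk (mul_nonneg (mul_nonneg (Real.sqrt_nonneg ((N0:ℝ))) (Real.sqrt_nonneg ((N1:ℝ)))) (Real.sqrt_nonneg ((N2:ℝ))))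
      _ = 576 * (CS + 1) * 2 ^ (((j:ℝ) + t + r) / 2)
          * (Real.sqrt (N0:ℝ) * Real.sqrt (N1:ℝ) * Real.sqrt (N2:ℝ)) := by ring
  -- the ENNReal chain
  have hchain : ∫⁻ x, (F 0 x) ^ (1/2:ℝ) * ((F 1 x * F 2 x) ^ (1/2:ℝ)) ∂μP
      ≤ ENNReal.ofReal (576 * (CS + 1) * 2 ^ (((j:ℝ) + t + r) / 2)
          * (Real.sqrt (N0:ℝ) * Real.sqrt (N1:ℝ) * Real.sqrt (N2:ℝ))) := by
    calc ∫⁻ x, (F 0 x) ^ (1/2:ℝ) * ((F 1 x * F 2 x) ^ (1/2:ℝ)) ∂μP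
        ≤ (∫⁻ x, ((F 0 x) ^ (1/2:ℝ)) ^ (2:ℝ) ∂μP) ^ (1/(2:ℝ))
          * (∫⁻ x, ((F 1 x * F 2 x) ^ (1/2:ℝ)) ^ (2:ℝ) ∂μP) ^ (1/(2:ℝ)) := hHolder
      _ = (∫⁻ x, F 0 x ∂μP) ^ (1/(2:ℝ)) * (∫⁻ x, F 1 x * F 2 x ∂μP) ^ (1/(2:ℝ)) := by
          rw [lintegral_congr fun x => hcollapse (F 0 x),
            lintegral_congr fun x => hcollapse (F 1 x * F 2 x)]
      _ ≤ ((N0 : ℝ≥0∞) * ENNReal.ofReal K1) ^ (1/(2:ℝ))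
          * ((N1 : ℝ≥0∞) * (N2 : ℝ≥0∞) * ENNReal.ofReal K2) ^ (1/(2:ℝ)) :=
          mul_le_mul' (ENNReal.rpow_le_rpow hN0 (by norm_num))
            (ENNReal.rpow_le_rpow hN12 (by norm_num))
      _ = (ENNReal.ofReal ((N0:ℝ) * K1)) ^ (1/(2:ℝ))
          * (ENNReal.ofReal (((N1:ℝ) * (N2:ℝ)) * K2)) ^ (1/(2:ℝ)) := by
          rw [← ENNReal.ofReal_natCast N0, ← ENNReal.ofReal_natCast N1,
            ← ENNReal.ofReal_natCast N2,
            ← ENNReal.ofReal_mul (Nat.cast_nonneg N0),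
            ← ENNReal.ofReal_mul (Nat.cast_nonneg N1),
            ← ENNReal.ofReal_mul (mul_nonneg (Nat.cast_nonneg N1) (Nat.cast_nonneg N2))]
      _ = ENNReal.ofReal (((N0:ℝ) * K1) ^ (1/2:ℝ))
          * ENNReal.ofReal ((((N1:ℝ) * (N2:ℝ)) * K2) ^ (1/2:ℝ)) := by
          rw [ENNReal.ofReal_rpow_of_nonneg
              (mul_nonneg (Nat.cast_nonneg N0) hK1pos.le) (by norm_num : (0:ℝ) ≤ 1/2),
            ENNReal.ofReal_rpow_of_nonneg
              (mul_nonneg (mul_nonneg (Nat.cast_nonneg N1) (Nat.cast_nonneg N2)) hK2pos.le)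
              (by norm_num : (0:ℝ) ≤ 1/2)]
      _ = ENNReal.ofReal (Real.sqrt ((N0:ℝ) * K1) * Real.sqrt (((N1:ℝ) * (N2:ℝ)) * K2)) := by
          rw [← Real.sqrt_eq_rpow, ← Real.sqrt_eq_rpow,
            ENNReal.ofReal_mul (Real.sqrt_nonneg _)]
      _ ≤ ENNReal.ofReal (576 * (CS + 1) * 2 ^ (((j:ℝ) + t + r) / 2)
          * (Real.sqrt (N0:ℝ) * Real.sqrt (N1:ℝ) * Real.sqrt (N2:ℝ))) :=
          ENNReal.ofReal_le_ofReal hreal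
  -- conclusion
  rw [Fin.prod_univ_three]
  rw [hIeq]
  refine ENNReal.toReal_le_of_le_ofReal ?_ hchain
  have hconst : (0:ℝ) ≤ 576 * (CS + 1) * 2 ^ (((j:ℝ) + t + r) / 2) := by positivity
  exact mul_nonneg hconst (mul_nonneg (mul_nonneg (Real.sqrt_nonneg ((N0:ℝ))) (Real.sqrt_nonneg ((N1:ℝ)))) (Real.sqrt_nonneg ((N2:ℝ))))
end
end

section
/- Let 𝒯={𝒯_n}_{n=1}^3 be a triple of finite families of unit tubes of (r,j,t,w,m)-type with direction-parameter sets S₁,S₂,S₃, and let λ∈ℕ. Then there exist N∈ℕ with N ≲ 2^{2λ} (absolute implicit constant) and partitions 𝒯_n = ⋃_{i=1}^N 𝒯_{n,i} (n=1,2,3) such that for each 1≤i≤N there exist k_i, k_i', k_i'', m_i and w' with: every T∈𝒯_{1,i} has direction n(ξ) for some ξ∈τ^{j+λ}_{k_i}∩𝔱^{j+t+λ}_{w,m_i}; every T∈𝒯_{2,i} has direction n(ξ) for some ξ∈τ^{j+λ}_{k_i'}∩𝔱^{j+t+λ}_{w,m_i}; and every T∈𝒯_{3,i} has direction n(ξ)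 for some ξ∈τ^{r+λ}_{k_i''}∩𝔱^{r+t+λ}_{w',m_i}. -/
open MeasureTheory
open scoped Classical

noncomputable section

/-! ### Auxiliary machinery for the angular decomposition -/

def toE2 (v : Fin 2 → ℝ) : E2 := (WithLp.equiv 2 (Fin 2 → ℝ)).symm v

def perp2 (w : E2) : E2 := toE2 ![-w 1, w 0]

lemma perp2_0 (w : E2) : perp2 w 0 = -w 1 := rfl
lemma perp2_1 (w : E2) : perp2 w 1 = w 0 := rfl

lemma inner_E2 (x y : E2) : (inner ℝ x y : ℝ) = x 0 * y 0 + x 1 * y 1 := by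
  simp [PiLp.inner_apply, Fin.sum_univ_two, RCLike.inner_apply, mul_comm]

lemma norm_E2 (x : E2) : ‖x‖ = Real.sqrt (x 0 ^ 2 + x 1 ^ 2) := by
  rw [EuclideanSpace.norm_eq]
  simp [Fin.sum_univ_two, Real.norm_eq_abs, sq_abs]

lemma unit_sq {w : E2} (hw : ‖w‖ = 1) : w 0 ^ 2 + w 1 ^ 2 = 1 := by
  have h := norm_E2 w
  rw [hw] at h
  have h0 : (0:ℝ) ≤ w 0 ^ 2 + w 1 ^ 2 := by positivity
  nlinarith [Real.sq_sqrt h0]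

lemma sub_apply' (x y : E2) (i : Fin 2) : (x - y) i = x i - y i := rfl

lemma resid (w : E2) (hw : ‖w‖ = 1) (x : E2) :
    ‖x - (inner ℝ x w : ℝ) • w‖ = |(inner ℝ x (perp2 w) : ℝ)| := by
  have hw2 := unit_sq hw
  have h : x - (inner ℝ x w : ℝ) • w = (inner ℝ x (perp2 w) : ℝ) • perp2 w := by
    ext i
    fin_cases i
    · show x 0 - (inner ℝ x w : ℝ) * w 0 = (inner ℝ x (perp2 w) : ℝ) * perp2 w 0
      rw [inner_E2, inner_E2, perp2_0, perp2_1]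
      linear_combination (-(x 0)) * hw2
    · show x 1 - (inner ℝ x w : ℝ) * w 1 = (inner ℝ x (perp2 w) : ℝ) * perp2 w 1
      rw [inner_E2, inner_E2, perp2_0, perp2_1]
      linear_combination (-(x 1)) * hw2
  rw [h, norm_smul, Real.norm_eq_abs]
  have hp : ‖perp2 w‖ = 1 := by
    rw [norm_E2, perp2_0, perp2_1]
    rw [show (-w 1)^2 + (w 0)^2 = 1 by linarith]
    exact Real.sqrt_one
  rw [hp, mul_one]

def pidx (J T lam : ℕ) (w m : E2) (ξ : E2) : ℤ × ℤ :=
  (⌊(inner ℝ (ξ - m) (perp2 w) : ℝ) / 2 ^ (-((J:ℝ) + T + lam + 1))⌋,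
   ⌊(inner ℝ (ξ - m) w : ℝ) / 2 ^ (-((J:ℝ) + lam + 1))⌋)

lemma two_rpow_pos (x : ℝ) : (0:ℝ) < 2 ^ x := Real.rpow_pos_of_pos two_pos x
lemma two_rpow_add (x y : ℝ) : (2:ℝ) ^ (x + y) = 2 ^ x * 2 ^ y := Real.rpow_add two_pos x y
lemma two_rpow_mono {x y : ℝ} (h : x ≤ y) : (2:ℝ) ^ x ≤ 2 ^ y :=
  Real.rpow_le_rpow_of_exponent_le one_le_two h

lemma floor_center {x ℓ : ℝ} (hℓ : 0 < ℓ) : |x - ((⌊x / ℓ⌋ : ℝ) + 1/2) * ℓ| ≤ ℓ / 2 := by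
  have h1 : (⌊x / ℓ⌋ : ℝ) ≤ x / ℓ := Int.floor_le _
  have h2 : x / ℓ < (⌊x / ℓ⌋ : ℝ) + 1 := Int.lt_floor_add_one _
  have hx1 : (⌊x / ℓ⌋ : ℝ) * ℓ ≤ x := by
    have := mul_le_mul_of_nonneg_right h1 hℓ.le
    rwa [div_mul_cancel₀ x hℓ.ne'] at this
  have hx2 : x < ((⌊x / ℓ⌋ : ℝ) + 1) * ℓ := by
    have := mul_lt_mul_of_pos_right h2 hℓ
    rwa [div_mul_cancel₀ x hℓ.ne'] at this
  rw [abs_le]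
  constructor <;> nlinarith

lemma pieces (J T lam : ℕ) (w m : E2) (hw : ‖w‖ = 1) (z : ℤ × ℤ) :
    ∃ k₀ m₀ : E2, ∀ ξ : E2, (∀ i, 0 ≤ ξ i ∧ ξ i ≤ 2) → pidx J T lam w m ξ = z →
      ξ ∈ sqr ((J:ℝ) + lam) k₀ ∩ strip ((J:ℝ) + T + lam) w m₀ := by
  have hw2 := unit_sq hw
  set ℓs : ℝ := 2 ^ (-((J:ℝ) + T + lam + 1)) with hℓs
  set ℓu : ℝ := 2 ^ (-((J:ℝ) + lam + 1)) with hℓu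
  have hℓsp : 0 < ℓs := two_rpow_pos _
  have hℓup : 0 < ℓu := two_rpow_pos _
  set sc : ℝ := ((z.1 : ℝ) + 1/2) * ℓs with hsc
  set uc : ℝ := ((z.2 : ℝ) + 1/2) * ℓu with huc
  set c : E2 := m + uc • w + sc • perp2 w with hc
  refine ⟨toE2 (fun i => c i - 2 ^ (-((J:ℝ) + lam)) / 2), m + sc • perp2 w, ?_⟩
  intro ξ h02 hz
  set u : ℝ := (inner ℝ (ξ - m) w : ℝ) with hu
  set s : ℝ := (inner ℝ (ξ - m) (perp2 w) : ℝ) with hs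
  have hz1 : z.1 = ⌊s / ℓs⌋ := by rw [← hz]; rfl
  have hz2 : z.2 = ⌊u / ℓu⌋ := by rw [← hz]; rfl
  have hsd : |s - sc| ≤ ℓs / 2 := by rw [hsc, hz1]; exact floor_center hℓsp
  have hud : |u - uc| ≤ ℓu / 2 := by rw [huc, hz2]; exact floor_center hℓup
  have hc0 : c 0 = m 0 + uc * w 0 + sc * (-w 1) := rfl
  have hc1 : c 1 = m 1 + uc * w 1 + sc * (w 0) := rfl
  have hwb0 : |w 0| ≤ 1 := by nlinarith [abs_nonneg (w 0), sq_abs (w 0), sq_nonneg (w 1)]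
  have hwb1 : |w 1| ≤ 1 := by nlinarith [abs_nonneg (w 1), sq_abs (w 1), sq_nonneg (w 0)]
  have hue : u = (ξ 0 - m 0) * w 0 + (ξ 1 - m 1) * w 1 := by
    rw [hu, inner_E2, sub_apply', sub_apply']
  have hse : s = (ξ 0 - m 0) * (-w 1) + (ξ 1 - m 1) * (w 0) := by
    rw [hs, inner_E2, sub_apply', sub_apply', perp2_0, perp2_1]
  have hd0 : ξ 0 - c 0 = (u - uc) * w 0 + (s - sc) * (-w 1) := by
    rw [hc0, hue, hse]; linear_combination (-(ξ 0 - m 0)) * hw2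
  have hd1 : ξ 1 - c 1 = (u - uc) * w 1 + (s - sc) * (w 0) := by
    rw [hc1, hue, hse]; linear_combination (-(ξ 1 - m 1)) * hw2
  have hsum : ℓu / 2 + ℓs / 2 ≤ 2 ^ (-((J:ℝ) + lam)) / 2 := by
    have e1 : ℓu = 2 ^ (-((J:ℝ) + lam)) / 2 := by
      rw [hℓu, show -((J:ℝ) + lam + 1) = -((J:ℝ) + lam) + (-1) by ring, two_rpow_add,
        Real.rpow_neg_one]; ring
    have e2 : ℓs ≤ ℓu := two_rpow_mono (by linarith [Nat.cast_nonneg (α := ℝ) T])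
    linarith
  have hbnd : ∀ i, |ξ i - c i| ≤ 2 ^ (-((J:ℝ) + lam)) / 2 := by
    intro i
    fin_cases i
    · calc |ξ 0 - c 0| ≤ |u - uc| * |w 0| + |s - sc| * |w 1| := by
            rw [hd0]
            refine (abs_add_le _ _).trans ?_
            rw [abs_mul, abs_mul, abs_neg]
      _ ≤ ℓu / 2 * 1 + ℓs / 2 * 1 :=
            add_le_add (mul_le_mul hud hwb0 (abs_nonneg _) (by linarith))
              (mul_le_mul hsd hwb1 (abs_nonneg _) (by linarith))
      _ ≤ 2 ^ (-((J:ℝ) + lam)) / 2 := by rw [mul_one, mul_one]; exact hsum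
    · calc |ξ 1 - c 1| ≤ |u - uc| * |w 1| + |s - sc| * |w 0| := by
            rw [hd1]
            refine (abs_add_le _ _).trans ?_
            rw [abs_mul, abs_mul]
      _ ≤ ℓu / 2 * 1 + ℓs / 2 * 1 :=
            add_le_add (mul_le_mul hud hwb1 (abs_nonneg _) (by linarith))
              (mul_le_mul hsd hwb0 (abs_nonneg _) (by linarith))
      _ ≤ 2 ^ (-((J:ℝ) + lam)) / 2 := by rw [mul_one, mul_one]; exact hsum
  constructor
  · intro i
    have h := hbnd i
    have hk : toE2 (fun i' => c i' - 2 ^ (-((J:ℝ) + lam)) / 2) i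
        = c i - 2 ^ (-((J:ℝ) + lam)) / 2 := rfl
    rw [hk]
    rw [abs_le] at h
    constructor
    · linarith [h.2]
    · linarith [h.1]
  · refine ⟨h02, ?_⟩
    have he : (inner ℝ (ξ - (m + sc • perp2 w)) (perp2 w) : ℝ) = s - sc := by
      rw [inner_E2, hse]
      have e0 : (ξ - (m + sc • perp2 w)) 0 = ξ 0 - (m 0 + sc * (-w 1)) := rfl
      have e1 : (ξ - (m + sc • perp2 w)) 1 = ξ 1 - (m 1 + sc * (w 0)) := rfl
      rw [e0, e1, perp2_0, perp2_1]
      linear_combination (-sc) * hw2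
    rw [resid w hw, he]
    refine hsd.trans ?_
    have h1 : ℓs ≤ 2 ^ (-((J:ℝ) + T + lam)) := two_rpow_mono (by linarith)
    linarith [two_rpow_pos (-((J:ℝ) + T + lam))]

lemma floor_mem_Icc {x : ℝ} {B : ℤ} (h : |x| ≤ (B:ℝ)) : ⌊x⌋ ∈ Finset.Icc (-B) B := by
  rw [Finset.mem_Icc]
  constructor
  · refine Int.le_floor.mpr ?_
    push_cast
    linarith [neg_abs_le x]
  · have h1 : (⌊x⌋ : ℝ) ≤ (B : ℝ) := (Int.floor_le x).trans ((le_abs_self x).trans h)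
    exact_mod_cast h1

lemma div_bound {x A l Bv : ℝ} (hx : |x| ≤ A) (hl : 0 < l) (hA : A / l ≤ Bv) :
    |x / l| ≤ Bv := by
  rw [abs_div, abs_of_pos hl]
  exact (by gcongr : |x| / l ≤ A / l).trans hA

lemma pidx_mem (J T lam : ℕ) (w m : E2) (hw : ‖w‖ = 1) {U : ℝ} (hU : 2 ≤ U) {ξ : E2}
    (hres : ‖ξ - m - (inner ℝ (ξ - m) w : ℝ) • w‖ ≤ 2 ^ (-((J:ℝ) + T)))
    (hnear : ‖ξ - m‖ ≤ U * 2 ^ (-(J:ℝ))) :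
    pidx J T lam w m ξ ∈
      Finset.Icc (-(⌈U⌉₊ * 2 ^ (lam+1) : ℤ)) (⌈U⌉₊ * 2 ^ (lam+1)) ×ˢ
      Finset.Icc (-(⌈U⌉₊ * 2 ^ (lam+1) : ℤ)) (⌈U⌉₊ * 2 ^ (lam+1)) := by
  have hUc : U ≤ (⌈U⌉₊ : ℝ) := Nat.le_ceil U
  have hBcast : (((⌈U⌉₊ * 2 ^ (lam+1) : ℤ)) : ℝ) = (⌈U⌉₊ : ℝ) * 2 ^ (lam+1 : ℕ) := by
    push_cast; ring
  have h2p : (2:ℝ) ^ ((lam:ℝ) + 1) = 2 ^ (lam+1 : ℕ) := by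
    rw [show ((lam:ℝ) + 1) = ((lam + 1 : ℕ) : ℝ) by push_cast; ring, Real.rpow_natCast]
  have hpow_pos : (0:ℝ) < 2 ^ (lam+1 : ℕ) := by positivity
  rw [resid w hw] at hres
  have huabs : |(inner ℝ (ξ - m) w : ℝ)| ≤ U * 2 ^ (-(J:ℝ)) := by
    calc |(inner ℝ (ξ - m) w : ℝ)| ≤ ‖ξ - m‖ * ‖w‖ := abs_real_inner_le_norm _ _
    _ = ‖ξ - m‖ := by rw [hw, mul_one]
    _ ≤ U * 2 ^ (-(J:ℝ)) := hnear
  rw [Finset.mem_product]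
  constructor
  · refine floor_mem_Icc (div_bound hres (two_rpow_pos _) ?_)
    have he : (2:ℝ) ^ (-((J:ℝ) + T)) / 2 ^ (-((J:ℝ) + T + lam + 1)) = 2 ^ ((lam:ℝ) + 1) := by
      rw [← Real.rpow_sub two_pos]
      congr 1
      ring
    rw [he, h2p, hBcast]
    nlinarith
  · refine floor_mem_Icc (div_bound huabs (two_rpow_pos _) ?_)
    have he : U * 2 ^ (-(J:ℝ)) / 2 ^ (-((J:ℝ) + lam + 1)) = U * 2 ^ ((lam:ℝ) + 1) := by
      rw [mul_div_assoc, ← Real.rpow_sub two_pos]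
      congr 2
      ring
    rw [he, h2p, hBcast]
    nlinarith

lemma self_mem_sqr (j : ℝ) (k : E2) : k ∈ sqr j k :=
  fun _ => ⟨le_refl _, le_add_of_nonneg_right (two_rpow_pos _).le⟩

lemma sqr_dist_le {j : ℝ} {k x y : E2} (hx : x ∈ sqr j k) (hy : y ∈ sqr j k) :
    dist x y ≤ 2 * 2 ^ (-j) := by
  have h0x := hx 0; have h1x := hx 1; have h0y := hy 0; have h1y := hy 1
  have hb : (x - y) 0 ^ 2 + (x - y) 1 ^ 2 ≤ (2 * 2 ^ (-j)) ^ 2 := by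
    rw [sub_apply', sub_apply']
    nlinarith [two_rpow_pos (-j)]
  rw [dist_eq_norm, norm_E2]
  calc Real.sqrt ((x - y) 0 ^ 2 + (x - y) 1 ^ 2) ≤ Real.sqrt ((2 * 2 ^ (-j)) ^ 2) :=
        Real.sqrt_le_sqrt hb
  _ = 2 * 2 ^ (-j) := Real.sqrt_sq (by positivity)

lemma close_points {cS d : ℝ} {A B : Set E2} (hc : 0 < cS) (hd : 0 < d)
    (hA : A.Nonempty) (hB : B.Nonempty) (h : cS * setDist A B ≤ d) :
    ∃ a ∈ A, ∃ b ∈ B, dist a b ≤ 2 * d / cS := by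
  obtain ⟨a0, ha0⟩ := hA
  obtain ⟨b0, hb0⟩ := hB
  have hne : {dd | ∃ a ∈ A, ∃ b ∈ B, dd = dist a b}.Nonempty := ⟨_, a0, ha0, b0, hb0, rfl⟩
  have hlt : sInf {dd | ∃ a ∈ A, ∃ b ∈ B, dd = dist a b} < 2 * d / cS := by
    have h1 : setDist A B ≤ d / cS := by
      rw [le_div_iff₀ hc]
      linarith [h]
    have h2 : d / cS < 2 * d / cS := by
      rw [div_lt_div_iff_of_pos_right hc]
      linarith
    exact lt_of_le_of_lt h1 h2
  obtain ⟨dd, ⟨a, ha, b, hb, rfl⟩, hlt'⟩ := exists_lt_of_csInf_lt hne hlt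
  exact ⟨a, ha, b, hb, hlt'.le⟩
/-- **angular decomposition.** A triple of `(r,j,t,w,m)`-type can be
partitioned into `N ≲ 2^{2λ}` subtriples, each localized at angular scale `λ`:
directions of `𝒯_{1,i}` come from `τ^{j+λ}_{k_i} ∩ 𝔱^{j+t+λ}_{w,m_i}`, those of `𝒯_{2,i}`
from `τ^{j+λ}_{k_i'} ∩ 𝔱^{j+t+λ}_{w,m_i}`, those of `𝒯_{3,i}` from
`τ^{r+λ}_{k_i''} ∩ 𝔱^{r+t+λ}_{w',m_i}`. -/
theorem stmt9 (cS CS : ℝ) (hc : 0 < cS) (hcC : cS ≤ CS) :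
    ∃ Cabs : ℝ, 0 < Cabs ∧
    ∀ (r j t : ℕ) (w m : E2) (𝒯 : Fin 3 → Finset Tube) (D : TypeData),
      IsTypeWith cS CS r j t w m 𝒯 D →
    ∀ lam : ℕ, ∃ N : ℕ, (N : ℝ) ≤ Cabs * 2 ^ (2 * (lam : ℝ)) ∧
      ∃ 𝒮 : Fin 3 → Fin N → Finset Tube,
        (∀ n, 𝒯 n = Finset.univ.biUnion (𝒮 n)) ∧
        (∀ n, ∀ i i' : Fin N, i ≠ i' → Disjoint (𝒮 n i) (𝒮 n i')) ∧
        (∀ i : Fin N, ∃ ki ki' ki'' mi w'' : E2, ‖w''‖ = 1 ∧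
          (∀ T ∈ 𝒮 0 i, ∃ ξ ∈ sqr ((j:ℝ) + lam) ki ∩ strip ((j:ℝ) + t + lam) w mi,
            T.dir = parabNormal ξ) ∧
          (∀ T ∈ 𝒮 1 i, ∃ ξ ∈ sqr ((j:ℝ) + lam) ki' ∩ strip ((j:ℝ) + t + lam) w mi,
            T.dir = parabNormal ξ) ∧
          (∀ T ∈ 𝒮 2 i, ∃ ξ ∈ sqr ((r:ℝ) + lam) ki'' ∩ strip ((r:ℝ) + t + lam) w'' mi,
            T.dir = parabNormal ξ)) := by
  classical
  set U : ℝ := 5 + 2 / cS with hUdef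
  have hcs2 : 0 < 2 / cS := by positivity
  have hU2 : (2:ℝ) ≤ U := by rw [hUdef]; linarith
  have hU0 : (0:ℝ) ≤ U := by linarith
  refine ⟨108 * (U + 1) ^ 2, by positivity, ?_⟩
  intro r j t w m 𝒯 D htype lam
  obtain ⟨hw, hw', hm, hrj, _hrad, hS1, hS2, hS3, hmk, hsim1, hsim2, hsim3, _hsimw,
    hd1, hd2, hd3⟩ := htype
  set B : ℤ := (⌈U⌉₊ * 2 ^ (lam + 1) : ℤ) with hB
  set Box : Finset (ℤ × ℤ) := Finset.Icc (-B) B ×ˢ Finset.Icc (-B) B with hBox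
  refine ⟨Fintype.card (Fin 3 × {z // z ∈ Box}), ?_, ?_⟩
  · -- cardinality bound
    have h1 : 1 ≤ ⌈U⌉₊ := Nat.one_le_ceil_iff.mpr (by linarith)
    have h1' : (1:ℤ) ≤ (⌈U⌉₊ : ℤ) := by exact_mod_cast h1
    have h2 : (1:ℤ) ≤ 2 ^ (lam + 1) := by exact_mod_cast Nat.one_le_two_pow (n := lam + 1)
    have hB1 : (1:ℤ) ≤ B := by rw [hB]; nlinarith
    have hp : (0:ℝ) < 2 ^ (lam + 1 : ℕ) := by positivity
    have hBR : (B:ℝ) ≤ (U + 1) * 2 ^ (lam + 1 : ℕ) := by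
      rw [hB]; push_cast
      have hce := (Nat.ceil_lt_add_one hU0).le
      nlinarith
    have hcard : Fintype.card (Fin 3 × {z // z ∈ Box}) = 3 * ((2*B+1).toNat * (2*B+1).toNat) := by
      rw [Fintype.card_prod, Fintype.card_coe, Fintype.card_fin, hBox,
        Finset.card_product, Int.card_Icc, show B + 1 - -B = 2*B+1 by ring]
    have hBn : (((2*B+1).toNat : ℕ) : ℝ) = 2*(B:ℝ)+1 := by
      have hnn := Int.toNat_of_nonneg (show (0:ℤ) ≤ 2*B+1 by linarith)
      rw [← Int.cast_natCast (R := ℝ), hnn]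
      push_cast; ring
    have hBr1 : (1:ℝ) ≤ (B:ℝ) := by exact_mod_cast hB1
    have hrpow : (2:ℝ) ^ (2*(lam:ℝ)) * 4 = ((2:ℝ) ^ (lam + 1 : ℕ))^2 := by
      rw [show (2*(lam:ℝ)) = ((2*lam : ℕ):ℝ) by push_cast; ring, Real.rpow_natCast]
      ring
    calc ((Fintype.card (Fin 3 × {z // z ∈ Box}) : ℕ) : ℝ) = 3 * ((2*(B:ℝ)+1) * (2*(B:ℝ)+1)) := by
          rw [hcard]; push_cast [hBn]; ring
    _ ≤ 108 * (U + 1) ^ 2 * 2 ^ (2*(lam:ℝ)) := by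
          nlinarith [mul_le_mul hBR hBR (by linarith) (by positivity),
            sq_nonneg ((U+1) * 2 ^ (lam + 1 : ℕ)), hrpow]
  · -- construction
    set e := (Fintype.equivFin (Fin 3 × {z // z ∈ Box})).symm with he
    set Jn : Fin 3 → ℕ := fun n => if n.val = 2 then r else j with hJn
    set wn : Fin 3 → E2 := fun n => if n.val = 2 then D.w' else w with hwndef
    set Sn : Fin 3 → Set E2 :=
      fun n => if n.val = 0 then D.S1 else if n.val = 1 then D.S2 else D.S3 with hSn
    have hfin3 : ∀ a : Fin 3, a = 0 ∨ a = 1 ∨ a = 2 := by decide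
    have hwu : ∀ n, ‖wn n‖ = 1 := by
      intro n
      rcases hfin3 n with rfl | rfl | rfl
      · exact hw
      · exact hw
      · exact hw'
    have hrj' : (2:ℝ) ^ (-(j:ℝ)) ≤ 2 ^ (-(r:ℝ)) := by
      refine two_rpow_mono ?_
      have : (r:ℝ) ≤ (j:ℝ) := by exact_mod_cast hrj
      linarith
    have hgeom : ∀ n, ∀ ξ ∈ Sn n, (∀ i, 0 ≤ ξ i ∧ ξ i ≤ 2) ∧
        ‖ξ - m - (inner ℝ (ξ - m) (wn n) : ℝ) • wn n‖ ≤ 2 ^ (-((Jn n : ℝ) + t)) ∧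
        ‖ξ - m‖ ≤ U * 2 ^ (-(Jn n : ℝ)) := by
      intro n ξ hξ
      rcases hfin3 n with rfl | rfl | rfl
      · show (∀ i, 0 ≤ ξ i ∧ ξ i ≤ 2) ∧
            ‖ξ - m - (inner ℝ (ξ - m) w : ℝ) • w‖ ≤ 2 ^ (-((j:ℝ) + t)) ∧
            ‖ξ - m‖ ≤ U * 2 ^ (-(j:ℝ))
        have hmem : ξ ∈ sqr (j:ℝ) D.k ∩ strip ((j:ℝ)+t) w m := hS1 hξ
        refine ⟨hmem.2.1, hmem.2.2, ?_⟩
        have hd := sqr_dist_le hmem.1 hmk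
        have hp := two_rpow_pos (-(j:ℝ))
        rw [show ‖ξ - m‖ = dist ξ m from (dist_eq_norm _ _).symm]
        have hU5 : (4:ℝ) + 2/cS ≤ U := by rw [hUdef]; linarith
        nlinarith
      · show (∀ i, 0 ≤ ξ i ∧ ξ i ≤ 2) ∧
            ‖ξ - m - (inner ℝ (ξ - m) w : ℝ) • w‖ ≤ 2 ^ (-((j:ℝ) + t)) ∧
            ‖ξ - m‖ ≤ U * 2 ^ (-(j:ℝ))
        have hmem : ξ ∈ sqr (j:ℝ) D.k' ∩ strip ((j:ℝ)+t) w m := hS2 hξ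
        refine ⟨hmem.2.1, hmem.2.2, ?_⟩
        obtain ⟨a, ha, b, hb, hab⟩ := close_points hc (two_rpow_pos (-(j:ℝ)))
          ⟨D.k, self_mem_sqr _ _⟩ ⟨D.k', self_mem_sqr _ _⟩ hsim1.1
        have hp := two_rpow_pos (-(j:ℝ))
        have t1 : dist ξ m ≤ dist ξ b + dist b a + dist a m := dist_triangle4 _ _ _ _
        have t2 : dist ξ b ≤ 2 * 2 ^ (-(j:ℝ)) := sqr_dist_le hmem.1 hb
        have t3 : dist b a ≤ 2 * 2 ^ (-(j:ℝ)) / cS := by rw [dist_comm]; exact hab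
        have t4 : dist a m ≤ 2 * 2 ^ (-(j:ℝ)) := sqr_dist_le ha hmk
        rw [show ‖ξ - m‖ = dist ξ m from (dist_eq_norm _ _).symm]
        have hq : 2 * 2 ^ (-(j:ℝ)) / cS = 2/cS * 2 ^ (-(j:ℝ)) := by ring
        rw [hq] at t3
        have hUe : U * 2 ^ (-(j:ℝ)) = 5 * 2 ^ (-(j:ℝ)) + 2/cS * 2 ^ (-(j:ℝ)) := by
          rw [hUdef]; ring
        rw [hUe]
        linarith
      · show (∀ i, 0 ≤ ξ i ∧ ξ i ≤ 2) ∧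
            ‖ξ - m - (inner ℝ (ξ - m) D.w' : ℝ) • D.w'‖ ≤ 2 ^ (-((r:ℝ) + t)) ∧
            ‖ξ - m‖ ≤ U * 2 ^ (-(r:ℝ))
        have hmem : ξ ∈ sqr (r:ℝ) D.k'' ∩ strip ((r:ℝ)+t) D.w' m := hS3 hξ
        refine ⟨hmem.2.1, hmem.2.2, ?_⟩
        obtain ⟨a, ha, b, hb, hab⟩ := close_points hc (two_rpow_pos (-(r:ℝ)))
          ⟨D.k, self_mem_sqr _ _⟩ ⟨D.k'', self_mem_sqr _ _⟩ hsim3.1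
        have hp := two_rpow_pos (-(r:ℝ))
        have t1 : dist ξ m ≤ dist ξ b + dist b a + dist a m := dist_triangle4 _ _ _ _
        have t2 : dist ξ b ≤ 2 * 2 ^ (-(r:ℝ)) := sqr_dist_le hmem.1 hb
        have t3 : dist b a ≤ 2 * 2 ^ (-(r:ℝ)) / cS := by rw [dist_comm]; exact hab
        have t4 : dist a m ≤ 2 * 2 ^ (-(r:ℝ)) := by
          have := sqr_dist_le ha hmk
          linarith
        rw [show ‖ξ - m‖ = dist ξ m from (dist_eq_norm _ _).symm]
        have hq : 2 * 2 ^ (-(r:ℝ)) / cS = 2/cS * 2 ^ (-(r:ℝ)) := by ring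
        rw [hq] at t3
        have hUe : U * 2 ^ (-(r:ℝ)) = 5 * 2 ^ (-(r:ℝ)) + 2/cS * 2 ^ (-(r:ℝ)) := by
          rw [hUdef]; ring
        rw [hUe]
        linarith
    have hdirAll : ∀ n : Fin 3, ∀ T : Tube, ∃ ξ : E2,
        T ∈ 𝒯 n → ξ ∈ Sn n ∧ T.dir = parabNormal ξ := by
      intro n T
      by_cases hT : T ∈ 𝒯 n
      · rcases hfin3 n with rfl | rfl | rfl
        · obtain ⟨ξ, hx1, hx2⟩ := hd1 T hT
          exact ⟨ξ, fun _ => ⟨hx1, hx2⟩⟩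
        · obtain ⟨ξ, hx1, hx2⟩ := hd2 T hT
          exact ⟨ξ, fun _ => ⟨hx1, hx2⟩⟩
        · obtain ⟨ξ, hx1, hx2⟩ := hd3 T hT
          exact ⟨ξ, fun _ => ⟨hx1, hx2⟩⟩
      · exact ⟨0, fun h => absurd h hT⟩
    choose ξc hξc using hdirAll
    set f : Fin 3 → Tube → ℤ × ℤ := fun n T => pidx (Jn n) t lam (wn n) m (ξc n T) with hf
    have hbox : ∀ n, ∀ T ∈ 𝒯 n, f n T ∈ Box := by
      intro n T hT
      obtain ⟨hmem, -⟩ := hξc n T hT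
      obtain ⟨-, hres, hnear⟩ := hgeom n _ hmem
      rw [hf, hBox, hB]
      exact pidx_mem (Jn n) t lam (wn n) m (hwu n) hU2 hres hnear
    refine ⟨fun n i => if (e i).1 = n then
      (𝒯 n).filter (fun T => f n T = ((e i).2 : ℤ × ℤ)) else ∅, ?_, ?_, ?_⟩
    · -- cover
      intro n
      ext T
      simp only [Finset.mem_biUnion, Finset.mem_univ, true_and]
      constructor
      · intro hT
        refine ⟨e.symm (n, ⟨f n T, hbox n T hT⟩), ?_⟩
        simp only [Equiv.apply_symm_apply, if_pos, Finset.mem_filter]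
        exact ⟨hT, trivial⟩
      · rintro ⟨i, hi⟩
        by_cases hni : (e i).1 = n
        · simp only [if_pos hni, Finset.mem_filter] at hi
          exact hi.1
        · simp only [if_neg hni] at hi
          exact absurd hi (Finset.notMem_empty T)
    · -- disjointness
      intro n i i' hne
      rw [Finset.disjoint_left]
      intro T hTi hTi'
      by_cases h1 : (e i).1 = n
      · by_cases h2 : (e i').1 = n
        · simp only [if_pos h1, Finset.mem_filter] at hTi
          simp only [if_pos h2, Finset.mem_filter] at hTi'
          refine hne (e.injective (Prod.ext (h1.trans h2.symm)
            (Subtype.ext (hTi.2.symm.trans hTi'.2))))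
        · simp only [if_neg h2] at hTi'
          exact absurd hTi' (Finset.notMem_empty T)
      · simp only [if_neg h1] at hTi
        exact absurd hTi (Finset.notMem_empty T)
    · -- per-piece localization
      intro i
      obtain ⟨kA, mA, hA⟩ := pieces (Jn (e i).1) t lam (wn (e i).1) m (hwu (e i).1)
        ((e i).2 : ℤ × ℤ)
      have key : ∀ T ∈ (𝒯 (e i).1).filter (fun T => f (e i).1 T = ((e i).2 : ℤ × ℤ)),
          ∃ ξ ∈ sqr ((Jn (e i).1 : ℝ) + lam) kA ∩
            strip ((Jn (e i).1 : ℝ) + t + lam) (wn (e i).1) mA,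
            T.dir = parabNormal ξ := by
        intro T hT
        rw [Finset.mem_filter] at hT
        obtain ⟨hmem, hdir⟩ := hξc _ T hT.1
        exact ⟨ξc _ T, hA _ (hgeom _ _ hmem).1 hT.2, hdir⟩
      rcases hfin3 (e i).1 with h0 | h0 | h0
      · have hne1 : (e i).1 ≠ 1 := by rw [h0]; decide
        have hne2 : (e i).1 ≠ 2 := by rw [h0]; decide
        refine ⟨kA, 0, 0, mA, D.w', hw', ?_, ?_, ?_⟩
        · intro T hT
          simp only [if_pos h0] at hT
          rw [h0] at key
          exact key T hT
        · intro T hT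
          simp only [if_neg hne1] at hT
          exact absurd hT (Finset.notMem_empty T)
        · intro T hT
          simp only [if_neg hne2] at hT
          exact absurd hT (Finset.notMem_empty T)
      · have hne1 : (e i).1 ≠ 0 := by rw [h0]; decide
        have hne2 : (e i).1 ≠ 2 := by rw [h0]; decide
        refine ⟨0, kA, 0, mA, D.w', hw', ?_, ?_, ?_⟩
        · intro T hT
          simp only [if_neg hne1] at hT
          exact absurd hT (Finset.notMem_empty T)
        · intro T hT
          simp only [if_pos h0] at hT
          rw [h0] at key
          exact key T hT
        · intro T hT
          simp only [if_neg hne2] at hT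
          exact absurd hT (Finset.notMem_empty T)
      · have hne1 : (e i).1 ≠ 0 := by rw [h0]; decide
        have hne2 : (e i).1 ≠ 1 := by rw [h0]; decide
        refine ⟨0, 0, kA, mA, D.w', hw', ?_, ?_, ?_⟩
        · intro T hT
          simp only [if_neg hne1] at hT
          exact absurd hT (Finset.notMem_empty T)
        · intro T hT
          simp only [if_neg hne2] at hT
          exact absurd hT (Finset.notMem_empty T)
        · intro T hT
          simp only [if_pos h0] at hT
          rw [h0] at key
          exact key T hT
end
end
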